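/- arXiv:1207.0946 — 5 statements merged into one kernel-verified Lean document; each statement's English description precedes it below -/
import Mathlib

section
/- Let X be a Banach space with a normalized basis (e_j). If the thresholding greedy algorithm converges, i.e. G_N(x) → x for every x in X, then there is a constant K such that ‖G_N(x)‖ ≤ K‖x‖ for all x ∈ X and all N (for every permutation realizing the decreasing rearrangement of coefficients). -/
open Finset NNReal ENNReal Filter

noncomputable section

variable (𝕜 X : Type*) [RCLike 𝕜] [NormedAddCommGroup X] [NormedSpace 𝕜 X]

/-- A normalized Schauder basis of a (real or complex) Banach space, given together with
its biorthogonal coefficient functionals. -/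
structure GreedyBasis where
  e : ℕ → X
  coeff : ℕ → X →L[𝕜] 𝕜
  norm_e : ∀ j, ‖e j‖ = 1
  biorth : ∀ i j, coeff i (e j) = if i = j then 1 else 0
  expansion : ∀ x : X,
    Tendsto (fun n => ∑ j ∈ Finset.range n, coeff j x • e j) atTop (nhds x)

variable {𝕜 X}

namespace GreedyBasis

variable (b : GreedyBasis 𝕜 X)

/-- The coordinate projection `S_A` onto a finite set `A` of indices. -/
def S (A : Finset ℕ) : X →L[𝕜] X := ∑ j ∈ A, (b.coeff j).smulRight (b.e j)

/-- `π` is a greedy (decreasing) rearrangement of the coefficients of `x`. -/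
def Greedy (x : X) (π : Equiv.Perm ℕ) : Prop :=
  ∀ k : ℕ, ‖b.coeff (π (k + 1)) x‖ ≤ ‖b.coeff (π k) x‖

/-- The thresholding greedy algorithm of order `N` (relative to the greedy ordering `π`). -/
def G (N : ℕ) (π : Equiv.Perm ℕ) (x : X) : X :=
  ∑ k ∈ Finset.range N, b.coeff (π k) x • b.e (π k)

/-- The best `N`-term approximation error `σ_N(x)`. -/
def σ (N : ℕ) (x : X) : ℝ≥0∞ :=
  ⨅ (A : Finset ℕ) (_ : A.card ≤ N) (c : ℕ → 𝕜),
    (‖x - ∑ j ∈ A, c j • b.e j‖₊ : ℝ≥0∞)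

/-- The expansional best approximation error `σ̃_N(x)`. -/
def σt (N : ℕ) (x : X) : ℝ≥0∞ :=
  ⨅ (A : Finset ℕ) (_ : A.card = N), (‖x - b.S A x‖₊ : ℝ≥0∞)

/-- `k_N = sup_{|A| ≤ N} ‖S_A‖`. -/
def kN (N : ℕ) : ℝ≥0∞ := ⨆ (A : Finset ℕ) (_ : A.card ≤ N), (‖b.S A‖₊ : ℝ≥0∞)

/-- Right democracy function `h_r(n) = sup_{|A| = n} ‖∑_{j ∈ A} e_j‖`. -/
def hr (n : ℕ) : ℝ≥0∞ := ⨆ (A : Finset ℕ) (_ : A.card = n), (‖∑ j ∈ A, b.e j‖₊ : ℝ≥0∞)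

/-- Left democracy function `h_l(n) = inf_{|A| = n} ‖∑_{j ∈ A} e_j‖`. -/
def hl (n : ℕ) : ℝ≥0∞ := ⨅ (A : Finset ℕ) (_ : A.card = n), (‖∑ j ∈ A, b.e j‖₊ : ℝ≥0∞)

/-- `μ(N) = sup_{1 ≤ n ≤ N} h_r(n)/h_l(n)`. -/
def μ (N : ℕ) : ℝ≥0∞ := ⨆ n ∈ Finset.Icc 1 N, b.hr n / b.hl n

/-- The basis is quasi-greedy with constant `K`:  `‖G_N(x)‖ ≤ K ‖x‖` for every `x`, every `N`,
and every greedy rearrangement. -/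
def QuasiGreedy (K : ℝ≥0) : Prop :=
  ∀ (x : X) (π : Equiv.Perm ℕ), b.Greedy x π → ∀ N : ℕ, ‖b.G N π x‖ ≤ K * ‖x‖

/-- The Lebesgue constant `C_N = sup_x ‖x - G_N(x)‖ / σ_N(x)`. -/
def CN (N : ℕ) : ℝ≥0∞ :=
  ⨆ (x : X) (π : Equiv.Perm ℕ) (_ : b.Greedy x π) (_ : b.σ N x ≠ 0),
    (‖x - b.G N π x‖₊ : ℝ≥0∞) / b.σ N x

/-- `C̃_N = sup_x ‖x - G_N(x)‖ / σ̃_N(x)`. -/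
def CtN (N : ℕ) : ℝ≥0∞ :=
  ⨆ (x : X) (π : Equiv.Perm ℕ) (_ : b.Greedy x π) (_ : b.σt N x ≠ 0),
    (‖x - b.G N π x‖₊ : ℝ≥0∞) / b.σt N x

/-- `D_N = sup_x σ̃_N(x) / σ_N(x)`. -/
def DN (N : ℕ) : ℝ≥0∞ :=
  ⨆ (x : X) (_ : b.σ N x ≠ 0), b.σt N x / b.σ N x

end GreedyBasis
namespace GreedyBasis

variable (b : GreedyBasis 𝕜 X)

/-- `A` is a greedy set for `x`. -/
def GSet (x : X) (A : Finset ℕ) : Prop :=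
  ∀ i ∈ A, ∀ j ∉ A, ‖b.coeff j x‖ ≤ ‖b.coeff i x‖

lemma S_apply (A : Finset ℕ) (x : X) :
    b.S A x = ∑ j ∈ A, b.coeff j x • b.e j := by
  simp [S, ContinuousLinearMap.sum_apply]

lemma coeff_S (A : Finset ℕ) (x : X) (i : ℕ) :
    b.coeff i (b.S A x) = if i ∈ A then b.coeff i x else 0 := by
  rw [S_apply, map_sum]
  simp only [map_smul, b.biorth, smul_eq_mul, mul_ite, mul_one, mul_zero]
  simp [Finset.sum_ite_eq, eq_comm]

lemma coeff_bound [CompleteSpace X] :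
    ∃ C : ℝ, 1 ≤ C ∧ ∀ (j : ℕ) (x : X), ‖b.coeff j x‖ ≤ C * ‖x‖ := by
  have hpt : ∀ x : X, ∃ Cx, ∀ n : ℕ, ‖b.S (Finset.range n) x‖ ≤ Cx := by
    intro x
    obtain ⟨Cx, hCx⟩ := (b.expansion x).norm.bddAbove_range
    exact ⟨Cx, fun n => by
      have : ‖∑ j ∈ Finset.range n, b.coeff j x • b.e j‖ ≤ Cx := hCx ⟨n, rfl⟩
      rwa [S_apply]⟩
  obtain ⟨C₀, hC₀⟩ := banach_steinhaus hpt
  refine ⟨max 1 (2 * C₀), le_max_left _ _, fun j x => ?_⟩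
  have hdiff : b.coeff j x • b.e j
      = b.S (Finset.range (j+1)) x - b.S (Finset.range j) x := by
    rw [S_apply, S_apply, Finset.sum_range_succ]; abel
  have h1 : ‖b.coeff j x‖ = ‖b.coeff j x • b.e j‖ := by
    rw [norm_smul, b.norm_e, mul_one]
  rw [h1, hdiff]
  have h3 : ∀ n, ‖b.S (Finset.range n) x‖ ≤ C₀ * ‖x‖ := fun n =>
    (b.S (Finset.range n)).le_of_opNorm_le (hC₀ n) x
  calc ‖b.S (Finset.range (j+1)) x - b.S (Finset.range j) x‖
      ≤ C₀ * ‖x‖ + C₀ * ‖x‖ := (norm_sub_le _ _).trans (add_le_add (h3 _) (h3 _))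
    _ = 2 * C₀ * ‖x‖ := by ring
    _ ≤ max 1 (2 * C₀) * ‖x‖ :=
        mul_le_mul_of_nonneg_right (le_max_right _ _) (norm_nonneg x)

lemma S_eq_self {x : X} {D : Finset ℕ} (h : ∀ j ∉ D, b.coeff j x = 0) :
    b.S D x = x := by
  have hev : ∀ n, D ⊆ Finset.range n → b.S (Finset.range n) x = b.S D x := by
    intro n hD
    rw [S_apply, S_apply]
    refine (Finset.sum_subset hD ?_).symm
    intro j _ hj
    rw [h j hj, zero_smul]
  have htend : Tendsto (fun n => b.S (Finset.range n) x) atTop (nhds (b.S D x)) := by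
    refine tendsto_atTop_of_eventually_const
      (i₀ := if hD : D.Nonempty then D.max' hD + 1 else 0) ?_
    intro n hn
    refine hev n fun d hd => ?_
    simp only [Finset.mem_range]
    split_ifs at hn with h'
    · exact lt_of_le_of_lt (Finset.le_max' D d hd) (by omega)
    · exact absurd ⟨d, hd⟩ h'
  have h2 : Tendsto (fun n => b.S (Finset.range n) x) atTop (nhds x) :=
    (b.expansion x).congr fun n => (S_apply b _ x).symm
  exact tendsto_nhds_unique htend h2

lemma norm_S_le (A : Finset ℕ) (x : X) {C : ℝ}
    (hC : ∀ (j : ℕ) (y : X), ‖b.coeff j y‖ ≤ C * ‖y‖) :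
    ‖b.S A x‖ ≤ A.card * C * ‖x‖ := by
  rw [S_apply]
  calc ‖∑ j ∈ A, b.coeff j x • b.e j‖ ≤ ∑ j ∈ A, ‖b.coeff j x • b.e j‖ :=
        norm_sum_le _ _
    _ ≤ ∑ _j ∈ A, C * ‖x‖ := by
        refine Finset.sum_le_sum fun j _ => ?_
        rw [norm_smul, b.norm_e, mul_one]; exact hC j x
    _ = A.card * C * ‖x‖ := by rw [Finset.sum_const, nsmul_eq_mul]; ring

end GreedyBasis
namespace GreedyBasis

variable (b : GreedyBasis 𝕜 X)

lemma neg_to_gset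
    (hbad : ∀ K : ℝ, ∃ (x : X) (π : Equiv.Perm ℕ), b.Greedy x π ∧
      ∃ N : ℕ, K * ‖x‖ < ‖b.G N π x‖) :
    ∀ K : ℝ, ∃ (x : X) (A : Finset ℕ), b.GSet x A ∧ K * ‖x‖ < ‖b.S A x‖ := by
  intro K
  obtain ⟨x, π, hg, N, hN⟩ := hbad K
  have anti : Antitone fun k => ‖b.coeff (π k) x‖ :=
    antitone_nat_of_succ_le fun k => hg k
  refine ⟨x, (Finset.range N).image π, ?_, ?_⟩
  · intro i hi j hj
    obtain ⟨k, hk, rfl⟩ := Finset.mem_image.mp hi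
    have hk' : N ≤ π.symm j := by
      by_contra h
      exact hj (Finset.mem_image.mpr ⟨π.symm j, Finset.mem_range.mpr (by omega),
        π.apply_symm_apply j⟩)
    have := anti (le_trans (Finset.mem_range.mp hk).le hk')
    simpa using this
  · have : b.S ((Finset.range N).image π) x = b.G N π x := by
      rw [S_apply, G, Finset.sum_image]
      intro i _ j _ h
      exact π.injective h
    rwa [this]

lemma supply [CompleteSpace X] {C : ℝ} (hC1 : 1 ≤ C)
    (hC : ∀ (j : ℕ) (x : X), ‖b.coeff j x‖ ≤ C * ‖x‖)
    (hbad : ∀ K : ℝ, ∃ (x : X) (A : Finset ℕ), b.GSet x A ∧ K * ‖x‖ < ‖b.S A x‖)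
    (F : Finset ℕ) (K : ℝ) (hK : 0 ≤ K) :
    ∃ (u : X) (D A : Finset ℕ), ‖u‖ = 1 ∧ (∀ j ∉ D, b.coeff j u = 0) ∧
      (∀ j ∈ D, b.coeff j u ≠ 0) ∧ Disjoint D F ∧ A ⊆ D ∧ b.GSet u A ∧
      K < ‖b.S A u‖ := by
  set cF : ℝ := (F.card : ℝ) * C with hcF
  have hcF0 : 0 ≤ cF := mul_nonneg (Nat.cast_nonneg _) (le_trans zero_le_one hC1)
  set K₀ : ℝ := 2 * (cF + (1 + cF) * (K + 1)) with hK₀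
  obtain ⟨x, A₀, hGS, hbig⟩ := hbad K₀
  have hK₀pos : 0 < K₀ := by positivity
  have hx : x ≠ 0 := by
    rintro rfl
    rw [map_zero] at hbig
    simp at hbig
  have hxpos : 0 < ‖x‖ := norm_pos_iff.mpr hx
  -- choose truncation level M
  obtain ⟨n₀, hn₀⟩ := Metric.tendsto_atTop.mp (b.expansion x) ‖x‖ hxpos
  set M : ℕ := max n₀ (A₀.sup id + 1) with hM
  have hA₀M : A₀ ⊆ Finset.range M := by
    intro j hj
    have : j ≤ A₀.sup id := Finset.le_sup (f := id) hj
    exact Finset.mem_range.mpr (by omega)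
  set u₁ : X := b.S (Finset.range M) x with hu₁
  have hu₁x : ‖u₁ - x‖ ≤ ‖x‖ := by
    have := hn₀ M (le_max_left _ _)
    rw [dist_eq_norm] at this
    have e1 : (∑ j ∈ Finset.range M, b.coeff j x • b.e j) = u₁ := (S_apply b _ x).symm
    rw [e1] at this
    exact this.le
  have hu₁norm : ‖u₁‖ ≤ 2 * ‖x‖ := by
    have h := norm_add_le (u₁ - x) x
    rw [sub_add_cancel] at h
    linarith
  have hcu₁ : ∀ j, b.coeff j u₁ = if j < M then b.coeff j x else 0 := by
    intro j
    rw [hu₁, coeff_S]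
    simp [Finset.mem_range]
  have hSA₀u₁ : b.S A₀ u₁ = b.S A₀ x := by
    rw [S_apply, S_apply]
    refine Finset.sum_congr rfl fun j hj => ?_
    rw [hcu₁ j, if_pos (Finset.mem_range.mp (hA₀M hj))]
  have hu₁ne : u₁ ≠ 0 := by
    intro h
    rw [h, map_zero] at hSA₀u₁
    rw [← hSA₀u₁, norm_zero] at hbig
    have hpos : 0 < K₀ * ‖x‖ := by positivity
    linarith
  have hu₁pos : 0 < ‖u₁‖ := norm_pos_iff.mpr hu₁ne
  have hGSu₁ : b.GSet u₁ A₀ := by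
    intro i hi j hj
    rw [hcu₁ i, if_pos (Finset.mem_range.mp (hA₀M hi)), hcu₁ j]
    split_ifs with h
    · exact hGS i hi j hj
    · rw [norm_zero]; exact norm_nonneg _
  -- subtract the F part
  set u₂ : X := u₁ - b.S F u₁ with hu₂
  have hcu₂ : ∀ j, b.coeff j u₂ = if j ∈ F then 0 else b.coeff j u₁ := by
    intro j
    rw [hu₂, map_sub, coeff_S b F u₁ j]
    split_ifs with h <;> simp
  have hSFu₁ : ‖b.S F u₁‖ ≤ cF * ‖u₁‖ := by
    have := norm_S_le b F u₁ hC
    rw [hcF]; linarith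
  have hu₂norm : ‖u₂‖ ≤ (1 + cF) * ‖u₁‖ := by
    calc ‖u₂‖ ≤ ‖u₁‖ + ‖b.S F u₁‖ := norm_sub_le _ _
      _ ≤ (1 + cF) * ‖u₁‖ := by linarith
  set A₁ : Finset ℕ := A₀ \ F with hA₁
  have hSA₁ : b.S A₁ u₂ = b.S A₀ u₁ - b.S (A₀ ∩ F) u₁ := by
    rw [S_apply, S_apply, S_apply]
    have h1 : ∀ j ∈ A₁, b.coeff j u₂ • b.e j = b.coeff j u₁ • b.e j := by
      intro j hj
      rw [hcu₂ j, if_neg (Finset.mem_sdiff.mp hj).2]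
    rw [Finset.sum_congr rfl h1]
    have h2 : A₁ = A₀ \ (A₀ ∩ F) := by rw [Finset.sdiff_inter_self_left]
    rw [h2, eq_sub_iff_add_eq, Finset.sum_sdiff (Finset.inter_subset_left)]
  have hSA₁big : (1 + cF) * (K + 1) * ‖u₁‖ ≤ ‖b.S A₁ u₂‖ := by
    have h1 : ‖b.S (A₀ ∩ F) u₁‖ ≤ cF * ‖u₁‖ := by
      have h := norm_S_le b (A₀ ∩ F) u₁ hC
      have hcard : ((A₀ ∩ F).card : ℝ) ≤ (F.card : ℝ) := by
        exact_mod_cast Finset.card_le_card (Finset.inter_subset_right)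
      have h0 : ((A₀ ∩ F).card : ℝ) * C * ‖u₁‖ ≤ (F.card : ℝ) * C * ‖u₁‖ :=
        mul_le_mul_of_nonneg_right
          (mul_le_mul_of_nonneg_right hcard (by linarith)) (norm_nonneg u₁)
      rw [hcF]
      linarith
    have h2 : K₀ * ‖x‖ ≥ K₀ * (‖u₁‖ / 2) := by
      have := hu₁norm
      nlinarith
    have h3 : ‖b.S A₀ u₁‖ - ‖b.S (A₀ ∩ F) u₁‖ ≤ ‖b.S A₁ u₂‖ := by
      rw [hSA₁]
      exact norm_sub_norm_le _ _
    have h4 : ‖b.S A₀ u₁‖ > K₀ * ‖x‖ := by rw [hSA₀u₁]; exact hbig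
    have : ‖b.S A₁ u₂‖ ≥ K₀ * (‖u₁‖ / 2) - cF * ‖u₁‖ := by linarith
    rw [hK₀] at this
    nlinarith
  have hSA₁K : (K + 1) * ‖u₂‖ ≤ ‖b.S A₁ u₂‖ := by
    refine le_trans ?_ hSA₁big
    have : (K+1) * ‖u₂‖ ≤ (K+1) * ((1 + cF) * ‖u₁‖) :=
      mul_le_mul_of_nonneg_left hu₂norm (by linarith)
    linarith [this]
  have hSA₁pos : 0 < ‖b.S A₁ u₂‖ := by
    refine lt_of_lt_of_le ?_ hSA₁big
    positivity
  have hu₂ne : u₂ ≠ 0 := by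
    intro h
    rw [h, map_zero, norm_zero] at hSA₁pos
    exact lt_irrefl _ hSA₁pos
  have hu₂pos : 0 < ‖u₂‖ := norm_pos_iff.mpr hu₂ne
  have hGSu₂ : b.GSet u₂ A₁ := by
    intro i hi j hj
    obtain ⟨hiA₀, hiF⟩ := Finset.mem_sdiff.mp hi
    rw [hcu₂ i, if_neg hiF, hcu₂ j]
    split_ifs with h
    · rw [norm_zero]; exact norm_nonneg _
    · have hjA₀ : j ∉ A₀ := fun hjA => hj (Finset.mem_sdiff.mpr ⟨hjA, h⟩)
      exact hGSu₁ i hiA₀ j hjA₀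
  -- exact support
  set D : Finset ℕ := (Finset.range M).filter (fun j => b.coeff j u₂ ≠ 0) with hD
  have hDsupp : ∀ j ∉ D, b.coeff j u₂ = 0 := by
    intro j hj
    rw [hD, Finset.mem_filter] at hj
    push_neg at hj
    by_cases h : j ∈ Finset.range M
    · exact hj h
    · rw [hcu₂ j]
      split_ifs with h'
      · rfl
      · rw [hcu₁ j, if_neg (fun hlt => h (Finset.mem_range.mpr hlt))]
  have hDne : ∀ j ∈ D, b.coeff j u₂ ≠ 0 := fun j hj => (Finset.mem_filter.mp hj).2
  have hDF : Disjoint D F := by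
    rw [Finset.disjoint_left]
    intro j hj hjF
    exact hDne j hj (by rw [hcu₂ j, if_pos hjF])
  set A₂ : Finset ℕ := A₁ ∩ D with hA₂
  have hSA₂ : b.S A₂ u₂ = b.S A₁ u₂ := by
    rw [S_apply, S_apply]
    refine Finset.sum_subset (Finset.inter_subset_left) fun j hj hj' => ?_
    have : j ∉ D := fun hD' => hj' (Finset.mem_inter.mpr ⟨hj, hD'⟩)
    rw [hDsupp j this, zero_smul]
  have hGSu₂' : b.GSet u₂ A₂ := by
    intro i hi j hj
    by_cases h : j ∈ A₁
    · have : j ∉ D := fun hD' => hj (Finset.mem_inter.mpr ⟨h, hD'⟩)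
      rw [hDsupp j this, norm_zero]
      exact norm_nonneg _
    · exact hGSu₂ i (Finset.mem_inter.mp hi).1 j h
  -- normalize
  set r : ℝ := ‖u₂‖⁻¹ with hr
  have hrpos : 0 < r := inv_pos.mpr hu₂pos
  refine ⟨(r : 𝕜) • u₂, D, A₂, ?_, ?_, ?_, hDF, Finset.inter_subset_right, ?_, ?_⟩
  · rw [norm_smul, RCLike.norm_ofReal, abs_of_pos hrpos, hr,
      inv_mul_cancel₀ (ne_of_gt hu₂pos)]
  · intro j hj
    rw [map_smul, hDsupp j hj, smul_zero]
  · intro j hj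
    rw [map_smul, smul_eq_mul]
    exact mul_ne_zero (by exact_mod_cast ne_of_gt hrpos) (hDne j hj)
  · intro i hi j hj
    rw [map_smul, map_smul, smul_eq_mul, smul_eq_mul, norm_mul, norm_mul]
    exact mul_le_mul_of_nonneg_left (hGSu₂' i hi j hj) (norm_nonneg _)
  · rw [map_smul, norm_smul, RCLike.norm_ofReal, abs_of_pos hrpos]
    have : K < r * ‖b.S A₂ u₂‖ := by
      rw [hSA₂]
      have h1 : K * ‖u₂‖ < (K + 1) * ‖u₂‖ := by nlinarith
      have h2 : K * ‖u₂‖ < ‖b.S A₁ u₂‖ := lt_of_lt_of_le h1 hSA₁K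
      calc K = r * (K * ‖u₂‖) := by
            rw [hr]; field_simp
          _ < r * ‖b.S A₁ u₂‖ := by
            exact mul_lt_mul_of_pos_left h2 hrpos
    exact this
end GreedyBasis
namespace GreedyBasis

section Rec

variable (b : GreedyBasis 𝕜 X) (C : ℝ) (uf : Finset ℕ → ℝ → X)
  (Df Af : Finset ℕ → ℝ → Finset ℕ)

private def recF : ℕ → Finset ℕ × ℝ × ℝ
  | 0 => (∅, 4 * C, 1)
  | k + 1 =>
      let p := recF k
      let ε : ℝ := min ((2:ℝ)⁻¹ ^ (k + 1)) (p.2.1 * p.2.2 / (4 * C))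
      let K : ℝ := k / ε
      let D := Df p.1 K
      let u := uf p.1 K
      let q := Nat.find (Finset.exists_notMem (p.1 ∪ D))
      (insert q (p.1 ∪ D), ε,
        if h : D.Nonempty then D.inf' h fun j => ‖b.coeff j u‖ else 1)

private def Fk (k : ℕ) : Finset ℕ := (recF b C uf Df k).1

private def εk (k : ℕ) : ℝ :=
  min ((2:ℝ)⁻¹ ^ (k + 1))
    ((recF b C uf Df k).2.1 * (recF b C uf Df k).2.2 / (4 * C))

private def Kk (k : ℕ) : ℝ := k / εk b C uf Df k

private def uk (k : ℕ) : X := uf (Fk b C uf Df k) (Kk b C uf Df k)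

private def Dk (k : ℕ) : Finset ℕ := Df (Fk b C uf Df k) (Kk b C uf Df k)

private def Ak (k : ℕ) : Finset ℕ := Af (Fk b C uf Df k) (Kk b C uf Df k)

private def qk (k : ℕ) : ℕ :=
  Nat.find (Finset.exists_notMem (Fk b C uf Df k ∪ Dk b C uf Df k))

private def θk (k : ℕ) : ℝ :=
  if h : (Dk b C uf Df k).Nonempty then
    (Dk b C uf Df k).inf' h fun j => ‖b.coeff j (uk b C uf Df k)‖
  else 1

private lemma recF_zero : recF b C uf Df 0 = (∅, 4 * C, 1) := rfl

private lemma recF_succ (k : ℕ) :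
    recF b C uf Df (k + 1) =
      (insert (qk b C uf Df k) (Fk b C uf Df k ∪ Dk b C uf Df k),
        εk b C uf Df k, θk b C uf Df k) := by
  rfl

end Rec

end GreedyBasis
namespace GreedyBasis

set_option linter.unusedSectionVars false

section Inv

variable (b : GreedyBasis 𝕜 X) (C : ℝ) (uf : Finset ℕ → ℝ → X)
  (Df Af : Finset ℕ → ℝ → Finset ℕ)

local notation "F!" => Fk b C uf Df
local notation "ε!" => εk b C uf Df
local notation "K!" => Kk b C uf Df
local notation "u!" => uk b C uf Df
local notation "D!" => Dk b C uf Df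
local notation "A!" => Ak b C uf Df Af
local notation "q!" => qk b C uf Df
local notation "θ!" => θk b C uf Df

variable (hC1 : 1 ≤ C)
  (hf : ∀ F K, 0 ≤ K → (‖uf F K‖ = 1 ∧
    (∀ j ∉ Df F K, b.coeff j (uf F K) = 0) ∧
    (∀ j ∈ Df F K, b.coeff j (uf F K) ≠ 0) ∧
    Disjoint (Df F K) F ∧ Af F K ⊆ Df F K ∧ b.GSet (uf F K) (Af F K) ∧
    K < ‖b.S (Af F K) (uf F K)‖))

include hC1 hf

private lemma pos_rec : ∀ k, 0 < (recF b C uf Df k).2.1 ∧ 0 < (recF b C uf Df k).2.2 := by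
  intro k
  induction k with
  | zero =>
      rw [recF_zero]
      refine ⟨?_, one_pos⟩
      show (0:ℝ) < 4 * C
      linarith
  | succ k ih =>
      rw [recF_succ]
      have hε : 0 < ε! k := by
        rw [εk]
        refine lt_min (by positivity) ?_
        have h4C : (0:ℝ) < 4 * C := by linarith
        exact div_pos (mul_pos ih.1 ih.2) h4C
      have hK : 0 ≤ K! k := div_nonneg (Nat.cast_nonneg k) hε.le
      obtain ⟨hu1, hsz, hsn, _, _, _, _⟩ := hf (F! k) (K! k) hK
      have hDne : (D! k).Nonempty := by
        rw [Finset.nonempty_iff_ne_empty]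
        intro hD
        have : u! k = 0 := by
          have h0 : b.S (∅ : Finset ℕ) (u! k) = u! k := by
            refine S_eq_self b fun j _ => ?_
            exact hsz j (by
              have h' : Df (F! k) (K! k) = (∅ : Finset ℕ) := hD
              rw [h']; exact Finset.notMem_empty j)
          rw [S_apply] at h0
          simpa using h0.symm
        rw [uk] at this
        rw [this, norm_zero] at hu1
        exact one_ne_zero hu1.symm
      constructor
      · exact hε
      · rw [θk, dif_pos hDne]
        rw [Finset.lt_inf'_iff]
        intro j hj
        exact norm_pos_iff.mpr (hsn j hj)

private lemma εpos : ∀ k, 0 < ε! k := by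
  intro k
  rw [εk]
  refine lt_min (by positivity) ?_
  have h := pos_rec b C uf Df Af hC1 hf k
  have h4C : (0:ℝ) < 4 * C := by linarith
  exact div_pos (mul_pos h.1 h.2) h4C

private lemma Knonneg : ∀ k, 0 ≤ K! k := fun k =>
  div_nonneg (Nat.cast_nonneg k) (εpos b C uf Df Af hC1 hf k).le

private lemma spec (k : ℕ) : ‖u! k‖ = 1 ∧
    (∀ j ∉ D! k, b.coeff j (u! k) = 0) ∧
    (∀ j ∈ D! k, b.coeff j (u! k) ≠ 0) ∧
    Disjoint (D! k) (F! k) ∧ A! k ⊆ D! k ∧ b.GSet (u! k) (A! k) ∧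
    K! k < ‖b.S (A! k) (u! k)‖ :=
  hf (F! k) (K! k) (Knonneg b C uf Df Af hC1 hf k)

private lemma Dne (k : ℕ) : (D! k).Nonempty := by
  rw [Finset.nonempty_iff_ne_empty]
  intro hD
  obtain ⟨hu1, hsz, _⟩ := spec b C uf Df Af hC1 hf k
  have : u! k = 0 := by
    have h0 : b.S (∅ : Finset ℕ) (u! k) = u! k := by
      refine S_eq_self b fun j _ => hsz j (by rw [hD]; exact Finset.notMem_empty j)
    rw [S_apply] at h0
    simpa using h0.symm
  rw [this, norm_zero] at hu1
  exact one_ne_zero hu1.symm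

private lemma θpos (k : ℕ) : 0 < θ! k := by
  have := pos_rec b C uf Df Af hC1 hf (k + 1)
  rw [recF_succ] at this
  exact this.2

private lemma θ_le_lvl (k : ℕ) : ∀ j ∈ D! k, θ! k ≤ ‖b.coeff j (u! k)‖ := by
  intro j hj
  rw [θk, dif_pos (Dne b C uf Df Af hC1 hf k)]
  exact Finset.inf'_le _ hj

private lemma lvl_le_C (hC : ∀ (j : ℕ) (x : X), ‖b.coeff j x‖ ≤ C * ‖x‖) (k : ℕ) :
    ∀ j, ‖b.coeff j (u! k)‖ ≤ C := by
  intro j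
  have h := hC j (u! k)
  rw [(spec b C uf Df Af hC1 hf k).1, mul_one] at h
  exact h

private lemma θleC (hC : ∀ (j : ℕ) (x : X), ‖b.coeff j x‖ ≤ C * ‖x‖) (k : ℕ) :
    θ! k ≤ C := by
  obtain ⟨j, hj⟩ := Dne b C uf Df Af hC1 hf k
  exact (θ_le_lvl b C uf Df Af hC1 hf k j hj).trans (lvl_le_C b C uf Df Af hC1 hf hC k j)

omit hC1 hf in
private lemma ε_le_pow (k : ℕ) : ε! k ≤ (2:ℝ)⁻¹ ^ (k + 1) := by
  rw [εk]; exact min_le_left _ _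

omit hf in
private lemma ε_succ (k : ℕ) : ε! (k + 1) * (4 * C) ≤ ε! k * θ! k := by
  have h4C : (0:ℝ) < 4 * C := by linarith
  have h : ε! (k+1) ≤ (recF b C uf Df (k+1)).2.1 * (recF b C uf Df (k+1)).2.2 / (4*C) := by
    rw [εk]; exact min_le_right _ _
  rw [recF_succ] at h
  calc ε! (k+1) * (4*C) ≤ (ε! k * θ! k / (4*C)) * (4*C) :=
        mul_le_mul_of_nonneg_right h h4C.le
    _ = ε! k * θ! k := by field_simp

omit hC1 hf in
private lemma Fk_succ (k : ℕ) : F! (k+1) = insert (q! k) (F! k ∪ D! k) := by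
  rw [Fk, recF_succ]

omit hC1 hf in
private lemma q_spec (k : ℕ) : q! k ∉ F! k ∪ D! k := by
  rw [qk]; exact Nat.find_spec (Finset.exists_notMem (F! k ∪ D! k))

omit hC1 hf in
private lemma q_min {k n : ℕ} (h : n ∉ F! k ∪ D! k) : q! k ≤ n := by
  rw [qk]; exact Nat.find_min' _ h

omit hC1 hf in
private lemma mem_Fk (k n : ℕ) : n ∈ F! k ↔ ∃ i < k, n ∈ D! i ∨ n = q! i := by
  induction k with
  | zero =>
      constructor
      · intro h; rw [Fk, recF_zero] at h; exact absurd h (Finset.notMem_empty n)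
      · rintro ⟨i, hi, -⟩; omega
  | succ k ih =>
      rw [Fk_succ, Finset.mem_insert, Finset.mem_union, ih]
      constructor
      · rintro (h | ⟨i, hi, h⟩ | h)
        · exact ⟨k, by omega, Or.inr h⟩
        · exact ⟨i, by omega, h⟩
        · exact ⟨k, by omega, Or.inl h⟩
      · rintro ⟨i, hi, h⟩
        rcases Nat.lt_succ_iff_lt_or_eq.mp hi with hik | rfl
        · exact Or.inr (Or.inl ⟨i, hik, h⟩)
        · rcases h with h | h
          · exact Or.inr (Or.inr h)
          · exact Or.inl h

omit hC1 hf in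
private lemma DsubF {i k : ℕ} (h : i < k) : D! i ⊆ F! k := fun n hn =>
  (mem_Fk b C uf Df k n).mpr ⟨i, h, Or.inl hn⟩

omit hC1 hf in
private lemma qinF {i k : ℕ} (h : i < k) : q! i ∈ F! k :=
  (mem_Fk b C uf Df k (q! i)).mpr ⟨i, h, Or.inr rfl⟩

private lemma D_disj {i k : ℕ} (h : i < k) : Disjoint (D! i) (D! k) := by
  have h1 : Disjoint (D! k) (F! k) := (spec b C uf Df Af hC1 hf k).2.2.2.1
  exact (h1.mono_right (DsubF b C uf Df h)).symm

omit hC1 hf in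
private lemma q_ne_q {i k : ℕ} (h : i ≠ k) : q! i ≠ q! k := by
  wlog hik : i < k generalizing i k
  · exact (this h.symm (by omega)).symm
  intro he
  have h1 : q! i ∈ F! k := qinF b C uf Df hik
  have h2 := q_spec b C uf Df k
  rw [he] at h1
  exact h2 (Finset.mem_union_left _ h1)

private lemma q_not_D (i k : ℕ) : q! i ∉ D! k := by
  rcases lt_trichotomy i k with h | rfl | h
  · intro hm
    have h1 : q! i ∈ F! k := qinF b C uf Df h
    exact Finset.disjoint_left.mp (spec b C uf Df Af hC1 hf k).2.2.2.1 hm h1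
  · intro hm
    exact q_spec b C uf Df i (Finset.mem_union_right _ hm)
  · intro hm
    exact q_spec b C uf Df i
      (Finset.mem_union_left _ (DsubF b C uf Df h hm))

private lemma D_unique {i k n : ℕ} (h1 : n ∈ D! i) (h2 : n ∈ D! k) : i = k := by
  by_contra h
  rcases Nat.lt_or_ge i k with hik | hik
  · exact (Finset.disjoint_left.mp (D_disj b C uf Df Af hC1 hf hik)) h1 h2
  · have : k < i := by omega
    exact (Finset.disjoint_left.mp (D_disj b C uf Df Af hC1 hf this)) h2 h1

omit hC1 hf in
private lemma cover (n : ℕ) : ∃ k, n ∈ D! k ∨ n = q! k := by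
  by_contra hcon
  push_neg at hcon
  have hnF : ∀ k, n ∉ F! k ∪ D! k := by
    intro k hk
    rcases Finset.mem_union.mp hk with h | h
    · obtain ⟨i, _, h⟩ := (mem_Fk b C uf Df k n).mp h
      rcases h with h | h
      · exact (hcon i).1 h
      · exact (hcon i).2 h
    · exact (hcon k).1 h
  have hq_le : ∀ k, q! k ≤ n := fun k => q_min b C uf Df (hnF k)
  have hinj : Set.InjOn (fun k => q! k) (Finset.range (n + 2) : Finset ℕ) := by
    intro i _ j _ hij
    by_contra h
    exact q_ne_q b C uf Df h hij
  have hmaps : ∀ k ∈ Finset.range (n + 2), q! k ∈ Finset.range (n + 1) := by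
    intro k _
    exact Finset.mem_range.mpr (by have := hq_le k; omega)
  have := Finset.card_le_card_of_injOn (fun k => q! k) hmaps hinj
  simp only [Finset.card_range] at this
  omega

end Inv

end GreedyBasis
namespace GreedyBasis

set_option linter.unusedSectionVars false

section Assemble

variable [CompleteSpace X] (b : GreedyBasis 𝕜 X) (C : ℝ) (uf : Finset ℕ → ℝ → X)
  (Df Af : Finset ℕ → ℝ → Finset ℕ)

local notation "F!" => Fk b C uf Df
local notation "ε!" => εk b C uf Df
local notation "K!" => Kk b C uf Df
local notation "u!" => uk b C uf Df
local notation "D!" => Dk b C uf Df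
local notation "A!" => Ak b C uf Df Af
local notation "q!" => qk b C uf Df
local notation "θ!" => θk b C uf Df

private def μk (k : ℕ) : ℝ := εk b C uf Df k * θk b C uf Df k / 2

private def yk (k : ℕ) : X :=
  ((εk b C uf Df k : ℝ) : 𝕜) • uk b C uf Df k
    + ((μk b C uf Df k : ℝ) : 𝕜) • b.e (qk b C uf Df k)

private def xx : X := ∑' k, yk b C uf Df k

local notation "μ!" => μk b C uf Df
local notation "y!" => yk b C uf Df
local notation "x!" => xx b C uf Df

variable (hC1 : 1 ≤ C)
  (hC : ∀ (j : ℕ) (x : X), ‖b.coeff j x‖ ≤ C * ‖x‖)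
  (hf : ∀ F K, 0 ≤ K → (‖uf F K‖ = 1 ∧
    (∀ j ∉ Df F K, b.coeff j (uf F K) = 0) ∧
    (∀ j ∈ Df F K, b.coeff j (uf F K) ≠ 0) ∧
    Disjoint (Df F K) F ∧ Af F K ⊆ Df F K ∧ b.GSet (uf F K) (Af F K) ∧
    K < ‖b.S (Af F K) (uf F K)‖))

include hC1 hf

private lemma μpos (k : ℕ) : 0 < μ! k := by
  rw [μk]
  have h1 := εpos b C uf Df Af hC1 hf k
  have h2 := θpos b C uf Df Af hC1 hf k
  positivity

include hC in
private lemma ynorm (k : ℕ) : ‖y! k‖ ≤ (1 + C) * (2:ℝ)⁻¹ ^ (k + 1) := by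
  have hεp := εpos b C uf Df Af hC1 hf k
  have hθC := θleC b C uf Df Af hC1 hf hC k
  have hεe := ε_le_pow b C uf Df k
  have hμ : μ! k ≤ ε! k * C := by
    rw [μk]
    nlinarith [θpos b C uf Df Af hC1 hf k]
  calc ‖y! k‖ ≤ ‖((ε! k : ℝ) : 𝕜) • u! k‖ + ‖((μ! k : ℝ) : 𝕜) • b.e (q! k)‖ :=
        norm_add_le _ _
    _ = ε! k * ‖u! k‖ + μ! k * ‖b.e (q! k)‖ := by
        rw [norm_smul, norm_smul, RCLike.norm_ofReal, RCLike.norm_ofReal,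
          abs_of_pos hεp, abs_of_pos (μpos b C uf Df Af hC1 hf k)]
    _ = ε! k + μ! k := by
        rw [(spec b C uf Df Af hC1 hf k).1, b.norm_e, mul_one, mul_one]
    _ ≤ ε! k + ε! k * C := by linarith
    _ = (1 + C) * ε! k := by ring
    _ ≤ (1 + C) * (2:ℝ)⁻¹ ^ (k + 1) := by
        refine mul_le_mul_of_nonneg_left hεe (by linarith)

include hC in
private lemma ysummable : Summable (y! ·) := by
  refine Summable.of_norm_bounded (g := fun k => (1 + C) * (2:ℝ)⁻¹ ^ (k + 1)) ?_ 
    (ynorm b C uf Df Af hC1 hC hf)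
  have hg : Summable (fun k : ℕ => ((2:ℝ)⁻¹) ^ k) :=
    summable_geometric_of_lt_one (by norm_num) (by norm_num)
  refine (hg.mul_left ((1 + C) * 2⁻¹)).congr (fun k => ?_)
  rw [pow_succ]; ring

include hC in
private lemma coeff_yk (n k : ℕ) :
    b.coeff n (y! k) = ((ε! k : ℝ) : 𝕜) * b.coeff n (u! k)
      + ((μ! k : ℝ) : 𝕜) * (if n = q! k then 1 else 0) := by
  rw [yk, map_add, map_smul, map_smul, smul_eq_mul, smul_eq_mul, b.biorth]

include hC in
private lemma coeff_xx_D {k j : ℕ} (hj : j ∈ D! k) :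
    b.coeff j x! = ((ε! k : ℝ) : 𝕜) * b.coeff j (u! k) := by
  rw [xx, ContinuousLinearMap.map_tsum _ (ysummable b C uf Df Af hC1 hC hf)]
  rw [tsum_eq_single k ?_]
  · rw [coeff_yk b C uf Df Af hC1 hC hf]
    have : j ≠ q! k := fun h => q_not_D b C uf Df Af hC1 hf k k (h ▸ hj)
    rw [if_neg this, mul_zero, add_zero]
  · intro k' hk'
    rw [coeff_yk b C uf Df Af hC1 hC hf]
    have h1 : j ∉ D! k' := fun h => hk' (D_unique b C uf Df Af hC1 hf h hj)
    have h2 : j ≠ q! k' := fun h => q_not_D b C uf Df Af hC1 hf k' k (h ▸ hj)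
    rw [(spec b C uf Df Af hC1 hf k').2.1 j h1, if_neg h2, mul_zero, mul_zero, add_zero]

include hC in
private lemma coeff_xx_q (k : ℕ) : b.coeff (q! k) x! = ((μ! k : ℝ) : 𝕜) := by
  rw [xx, ContinuousLinearMap.map_tsum _ (ysummable b C uf Df Af hC1 hC hf)]
  rw [tsum_eq_single k ?_]
  · rw [coeff_yk b C uf Df Af hC1 hC hf]
    rw [(spec b C uf Df Af hC1 hf k).2.1 _ (q_not_D b C uf Df Af hC1 hf k k),
      if_pos rfl, mul_zero, zero_add, mul_one]
  · intro k' hk'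
    rw [coeff_yk b C uf Df Af hC1 hC hf]
    have h1 : q! k ∉ D! k' := q_not_D b C uf Df Af hC1 hf k k'
    have h2 : q! k ≠ q! k' := q_ne_q b C uf Df (fun h => hk' h.symm)
    rw [(spec b C uf Df Af hC1 hf k').2.1 _ h1, if_neg h2, mul_zero, mul_zero, add_zero]

include hC in
private lemma lvl_q (k : ℕ) : ‖b.coeff (q! k) x!‖ = μ! k := by
  rw [coeff_xx_q b C uf Df Af hC1 hC hf, RCLike.norm_ofReal,
    abs_of_pos (μpos b C uf Df Af hC1 hf k)]

include hC in
private lemma lvl_D {k j : ℕ} (hj : j ∈ D! k) :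
    ‖b.coeff j x!‖ = ε! k * ‖b.coeff j (u! k)‖ := by
  rw [coeff_xx_D b C uf Df Af hC1 hC hf hj, norm_mul, RCLike.norm_ofReal,
    abs_of_pos (εpos b C uf Df Af hC1 hf k)]

include hC in
private lemma lvl_D_lb {k j : ℕ} (hj : j ∈ D! k) :
    ε! k * θ! k ≤ ‖b.coeff j x!‖ := by
  rw [lvl_D b C uf Df Af hC1 hC hf hj]
  exact mul_le_mul_of_nonneg_left (θ_le_lvl b C uf Df Af hC1 hf k j hj)
    (εpos b C uf Df Af hC1 hf k).le

include hC in
private lemma lvl_D_ub {k j : ℕ} (hj : j ∈ D! k) :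
    ‖b.coeff j x!‖ ≤ ε! k * C := by
  rw [lvl_D b C uf Df Af hC1 hC hf hj]
  exact mul_le_mul_of_nonneg_left (lvl_le_C b C uf Df Af hC1 hf hC k j)
    (εpos b C uf Df Af hC1 hf k).le

private lemma μ_lt_lb (k : ℕ) : μ! k < ε! k * θ! k := by
  rw [μk]
  have h1 := εpos b C uf Df Af hC1 hf k
  have h2 := θpos b C uf Df Af hC1 hf k
  nlinarith

include hC in
private lemma next_le_μ (k : ℕ) : ε! (k + 1) * C ≤ μ! k := by
  have h := ε_succ b C uf Df hC1 k
  rw [μk]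
  nlinarith [εpos b C uf Df Af hC1 hf (k+1)]

include hC in
private lemma chunk_ub {k n : ℕ} (hn : n ∈ D! k ∨ n = q! k) :
    ‖b.coeff n x!‖ ≤ ε! k * C := by
  rcases hn with hn | rfl
  · exact lvl_D_ub b C uf Df Af hC1 hC hf hn
  · rw [lvl_q b C uf Df Af hC1 hC hf, μk]
    have h1 := εpos b C uf Df Af hC1 hf k
    have h2 := θpos b C uf Df Af hC1 hf k
    have h3 := θleC b C uf Df Af hC1 hf hC k
    nlinarith

include hC in
private lemma chunk_lb {k n : ℕ} (hn : n ∈ D! k ∨ n = q! k) :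
    μ! k ≤ ‖b.coeff n x!‖ := by
  rcases hn with hn | rfl
  · exact (μ_lt_lb b C uf Df Af hC1 hf k).le.trans (lvl_D_lb b C uf Df Af hC1 hC hf hn)
  · rw [lvl_q b C uf Df Af hC1 hC hf]

include hC in
private lemma μ_antitone : Antitone (μ! ·) := by
  refine antitone_nat_of_succ_le fun k => ?_
  have h1 : μ! (k+1) ≤ ε! (k+1) * C := by
    rw [μk]
    have h2 := εpos b C uf Df Af hC1 hf (k+1)
    have h3 := θpos b C uf Df Af hC1 hf (k+1)
    have h4 := θleC b C uf Df Af hC1 hf hC (k+1)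
    nlinarith
  exact h1.trans (next_le_μ b C uf Df Af hC1 hC hf k)

include hC in
private lemma chunk_lt {i k n m : ℕ} (hik : i < k)
    (hn : n ∈ D! k ∨ n = q! k) (hm : m ∈ D! i ∨ m = q! i) :
    ‖b.coeff n x!‖ ≤ ‖b.coeff m x!‖ := by
  obtain ⟨k', rfl⟩ : ∃ k', k = k' + 1 := ⟨k - 1, by omega⟩
  have h1 : ‖b.coeff n x!‖ ≤ ε! (k' + 1) * C := chunk_ub b C uf Df Af hC1 hC hf hn
  have h2 : ε! (k' + 1) * C ≤ μ! k' := next_le_μ b C uf Df Af hC1 hC hf k'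
  have h3 : μ! k' ≤ μ! i := μ_antitone b C uf Df Af hC1 hC hf (by omega)
  exact h1.trans (h2.trans (h3.trans (chunk_lb b C uf Df Af hC1 hC hf hm)))

end Assemble

end GreedyBasis
namespace GreedyBasis

set_option linter.unusedSectionVars false

section Perm

variable [CompleteSpace X] (b : GreedyBasis 𝕜 X) (C : ℝ) (uf : Finset ℕ → ℝ → X)
  (Df Af : Finset ℕ → ℝ → Finset ℕ)

local notation "F!" => Fk b C uf Df
local notation "ε!" => εk b C uf Df
local notation "K!" => Kk b C uf Df
local notation "u!" => uk b C uf Df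
local notation "D!" => Dk b C uf Df
local notation "A!" => Ak b C uf Df Af
local notation "q!" => qk b C uf Df
local notation "θ!" => θk b C uf Df
local notation "μ!" => μk b C uf Df
local notation "y!" => yk b C uf Df
local notation "x!" => xx b C uf Df

private def lvl (n : ℕ) : ℝ := ‖b.coeff n (xx b C uf Df)‖

local notation "lv!" => lvl b C uf Df

private def sKey (m n : ℕ) : Bool := decide (lvl b C uf Df n ≤ lvl b C uf Df m)

private def Lk (k : ℕ) : List ℕ :=
  ((Ak b C uf Df Af k).toList.mergeSort (sKey b C uf Df))
    ++ (((Dk b C uf Df k) \ (Ak b C uf Df Af k)).toList.mergeSort (sKey b C uf Df))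
    ++ [qk b C uf Df k]

private def off : ℕ → ℕ
  | 0 => 0
  | k + 1 => off k + (Lk b C uf Df Af k).length

private def dec (n : ℕ) : ℕ := Nat.findGreatest (fun k => off b C uf Df Af k ≤ n) n

private def enum (n : ℕ) : ℕ :=
  (Lk b C uf Df Af (dec b C uf Df Af n)).getD
    (n - off b C uf Df Af (dec b C uf Df Af n)) 0

local notation "L!" => Lk b C uf Df Af
local notation "off!" => off b C uf Df Af
local notation "dec!" => dec b C uf Df Af
local notation "en!" => enum b C uf Df Af

variable (hC1 : 1 ≤ C)
  (hC : ∀ (j : ℕ) (x : X), ‖b.coeff j x‖ ≤ C * ‖x‖)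
  (hf : ∀ F K, 0 ≤ K → (‖uf F K‖ = 1 ∧
    (∀ j ∉ Df F K, b.coeff j (uf F K) = 0) ∧
    (∀ j ∈ Df F K, b.coeff j (uf F K) ≠ 0) ∧
    Disjoint (Df F K) F ∧ Af F K ⊆ Df F K ∧ b.GSet (uf F K) (Af F K) ∧
    K < ‖b.S (Af F K) (uf F K)‖))

include hC1 hf

private lemma mem_Lk (k n : ℕ) : n ∈ L! k ↔ n ∈ D! k ∨ n = q! k := by
  have hAD : A! k ⊆ D! k := (spec b C uf Df Af hC1 hf k).2.2.2.2.1
  simp only [Lk, List.mem_append, (List.mergeSort_perm _ _).mem_iff,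
    Finset.mem_toList, List.mem_singleton, Finset.mem_sdiff]
  constructor
  · rintro ((h | ⟨h, -⟩) | h)
    · exact Or.inl (hAD h)
    · exact Or.inl h
    · exact Or.inr h
  · rintro (h | h)
    · by_cases hA : n ∈ A! k
      · exact Or.inl (Or.inl hA)
      · exact Or.inl (Or.inr ⟨h, hA⟩)
    · exact Or.inr h

private lemma len_Lk (k : ℕ) : (L! k).length = (D! k).card + 1 := by
  have hAD : A! k ⊆ D! k := (spec b C uf Df Af hC1 hf k).2.2.2.2.1
  simp only [Lk, List.length_append, List.length_mergeSort, Finset.length_toList,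
    List.length_singleton]
  rw [Finset.card_sdiff_of_subset hAD]
  have := Finset.card_le_card hAD
  omega

private lemma nodup_Lk (k : ℕ) : (L! k).Nodup := by
  have hAD : A! k ⊆ D! k := (spec b C uf Df Af hC1 hf k).2.2.2.2.1
  simp only [Lk]
  rw [List.append_assoc, List.nodup_append, List.nodup_append]
  refine ⟨(List.mergeSort_perm _ _).nodup_iff.mpr (Finset.nodup_toList _),
    ⟨(List.mergeSort_perm _ _).nodup_iff.mpr (Finset.nodup_toList _),
      List.nodup_singleton _, ?_⟩, ?_⟩
  · intro a ha c hb hac; subst hac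
    rw [(List.mergeSort_perm _ _).mem_iff, Finset.mem_toList, Finset.mem_sdiff] at ha
    rw [List.mem_singleton] at hb
    exact q_not_D b C uf Df Af hC1 hf k k (hb ▸ ha.1)
  · intro a ha c hb hac; subst hac
    rw [(List.mergeSort_perm _ _).mem_iff, Finset.mem_toList] at ha
    rw [List.mem_append, (List.mergeSort_perm _ _).mem_iff, Finset.mem_toList,
      Finset.mem_sdiff, List.mem_singleton] at hb
    rcases hb with ⟨-, hb⟩ | hb
    · exact hb ha
    · exact q_not_D b C uf Df Af hC1 hf k k (hb ▸ hAD ha)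

include hC in
private lemma sorted_Lk (k : ℕ) :
    List.Pairwise (fun m n => lv! n ≤ lv! m) (L! k) := by
  have hAD : A! k ⊆ D! k := (spec b C uf Df Af hC1 hf k).2.2.2.2.1
  have hGS : b.GSet (u! k) (A! k) := (spec b C uf Df Af hC1 hf k).2.2.2.2.2.1
  have hsorted : ∀ l : List ℕ, List.Pairwise (fun m n => lv! n ≤ lv! m)
      (l.mergeSort (sKey b C uf Df)) := by
    intro l
    have h := List.pairwise_mergeSort (le := sKey b C uf Df)
      (fun a c d hab hbc => by
        simp only [sKey, decide_eq_true_eq] at *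
        exact le_trans hbc hab)
      (fun a c => by
        simp only [sKey, Bool.or_eq_true, decide_eq_true_eq]
        exact (le_total (lv! c) (lv! a)))
      l
    exact h.imp (fun hab => by simpa [sKey, decide_eq_true_eq] using hab)
  have hchunk_lb : ∀ n, (n ∈ D! k ∨ n = q! k) → μ! k ≤ lv! n := fun n hn =>
    chunk_lb b C uf Df Af hC1 hC hf hn
  simp only [Lk]
  rw [List.append_assoc, List.pairwise_append, List.pairwise_append]
  refine ⟨hsorted _, ⟨hsorted _, List.pairwise_singleton _ _, ?_⟩, ?_⟩
  · intro a ha c hc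
    rw [(List.mergeSort_perm _ _).mem_iff, Finset.mem_toList, Finset.mem_sdiff] at ha
    rw [List.mem_singleton] at hc
    subst hc
    have h1 : lv! (q! k) = μ! k := lvl_q b C uf Df Af hC1 hC hf k
    rw [h1]
    exact hchunk_lb a (Or.inl ha.1)
  · intro a ha c hc
    rw [(List.mergeSort_perm _ _).mem_iff, Finset.mem_toList] at ha
    rw [List.mem_append, (List.mergeSort_perm _ _).mem_iff, Finset.mem_toList,
      Finset.mem_sdiff, List.mem_singleton] at hc
    rcases hc with ⟨hcD, hcA⟩ | rfl
    · show lv! c ≤ lv! a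
      have hl1 : lv! c = ε! k * ‖b.coeff c (u! k)‖ := lvl_D b C uf Df Af hC1 hC hf hcD
      have hl2 : lv! a = ε! k * ‖b.coeff a (u! k)‖ := lvl_D b C uf Df Af hC1 hC hf (hAD ha)
      rw [hl1, hl2]
      exact mul_le_mul_of_nonneg_left (hGS a ha c hcA)
        (εpos b C uf Df Af hC1 hf k).le
    · show lv! (q! k) ≤ lv! a
      rw [show lv! (q! k) = μ! k from lvl_q b C uf Df Af hC1 hC hf k]
      exact hchunk_lb a (Or.inl (hAD ha))

omit hC1 hf in
private lemma off_succ (k : ℕ) : off! (k + 1) = off! k + (L! k).length := rfl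

private lemma off_lt_succ (k : ℕ) : off! k < off! (k + 1) := by
  rw [off_succ, len_Lk b C uf Df Af hC1 hf k]
  omega

private lemma off_mono : Monotone off! :=
  monotone_nat_of_le_succ fun k => (off_lt_succ b C uf Df Af hC1 hf k).le

private lemma k_le_off (k : ℕ) : k ≤ off! k := by
  induction k with
  | zero => exact Nat.zero_le _
  | succ k ih => have := off_lt_succ b C uf Df Af hC1 hf k; omega

private lemma dec_le1 (n : ℕ) : off! (dec! n) ≤ n := by
  have h0 : off! 0 ≤ n := Nat.zero_le n
  exact Nat.findGreatest_spec (P := fun k => off! k ≤ n) (m := 0) (Nat.zero_le n) h0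

private lemma dec_lt (n : ℕ) : n < off! (dec! n + 1) := by
  by_contra h
  push_neg at h
  have h1 : dec! n + 1 ≤ n :=
    le_trans (k_le_off b C uf Df Af hC1 hf (dec! n + 1)) h
  exact Nat.findGreatest_is_greatest (Nat.lt_succ_self _) h1 h

private lemma dec_unique {k n : ℕ} (h1 : off! k ≤ n) (h2 : n < off! (k + 1)) :
    dec! n = k := by
  by_contra hne
  rcases Nat.lt_or_ge (dec! n) k with h | h
  · have : off! (dec! n + 1) ≤ off! k := off_mono b C uf Df Af hC1 hf (by omega)
    have := dec_lt b C uf Df Af hC1 hf n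
    omega
  · have hk : k < dec! n := by omega
    have : off! (k + 1) ≤ off! (dec! n) := off_mono b C uf Df Af hC1 hf (by omega)
    have := dec_le1 b C uf Df Af hC1 hf n
    omega

private lemma enum_eq (k i : ℕ) (h : i < (L! k).length) :
    en! (off! k + i) = (L! k).get ⟨i, h⟩ := by
  have hd : dec! (off! k + i) = k := by
    refine dec_unique b C uf Df Af hC1 hf (Nat.le_add_right _ _) ?_
    rw [off_succ]
    omega
  rw [enum, hd]
  have : off! k + i - off! k = i := by omega
  rw [this, List.getD_eq_get (i := ⟨i, h⟩)]

private lemma enum_mem_chunk (k i : ℕ) (h : i < (L! k).length) :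
    en! (off! k + i) ∈ D! k ∨ en! (off! k + i) = q! k := by
  rw [enum_eq b C uf Df Af hC1 hf k i h]
  exact (mem_Lk b C uf Df Af hC1 hf k _).mp (List.get_mem _ _)

private lemma chunk_unique {i k n : ℕ} (h1 : n ∈ D! i ∨ n = q! i)
    (h2 : n ∈ D! k ∨ n = q! k) : i = k := by
  rcases h1 with h1 | h1 <;> rcases h2 with h2 | h2
  · exact D_unique b C uf Df Af hC1 hf h1 h2
  · exact absurd (h2 ▸ h1) (q_not_D b C uf Df Af hC1 hf k i)
  · exact absurd (h1 ▸ h2) (q_not_D b C uf Df Af hC1 hf i k)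
  · by_contra h
    exact q_ne_q b C uf Df (fun he => h he) (h1.symm.trans h2)

private lemma decomp (n : ℕ) :
    ∃ k i, n = off! k + i ∧ i < (L! k).length := by
  refine ⟨dec! n, n - off! (dec! n), ?_, ?_⟩
  · have := dec_le1 b C uf Df Af hC1 hf n; omega
  · have h1 := dec_le1 b C uf Df Af hC1 hf n
    have h2 := dec_lt b C uf Df Af hC1 hf n
    rw [off_succ] at h2
    omega

private lemma enum_inj : Function.Injective en! := by
  intro n n' he
  obtain ⟨k, i, rfl, hi⟩ := decomp b C uf Df Af hC1 hf n
  obtain ⟨k', i', rfl, hi'⟩ := decomp b C uf Df Af hC1 hf n'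
  have h1 := enum_mem_chunk b C uf Df Af hC1 hf k i hi
  have h2 := enum_mem_chunk b C uf Df Af hC1 hf k' i' hi'
  rw [he] at h1
  have hkk : k = k' := chunk_unique b C uf Df Af hC1 hf h1 h2
  subst hkk
  rw [enum_eq b C uf Df Af hC1 hf k i hi, enum_eq b C uf Df Af hC1 hf k i' hi'] at he
  have := (List.Nodup.get_inj_iff (nodup_Lk b C uf Df Af hC1 hf k)).mp he.symm
  have hii : i' = i := by simpa using Fin.mk.inj_iff.mp this
  omega

private lemma enum_surj : Function.Surjective en! := by
  intro m
  obtain ⟨k, hk⟩ := cover b C uf Df m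
  have hm : m ∈ L! k := (mem_Lk b C uf Df Af hC1 hf k m).mpr hk
  obtain ⟨⟨i, hi⟩, hget⟩ := List.mem_iff_get.mp hm
  exact ⟨off! k + i, by rw [enum_eq b C uf Df Af hC1 hf k i hi]; exact hget⟩

include hC in
private lemma greedy_lvl (n : ℕ) : lv! (en! (n + 1)) ≤ lv! (en! n) := by
  obtain ⟨k, i, rfl, hi⟩ := decomp b C uf Df Af hC1 hf n
  by_cases hlast : i + 1 < (L! k).length
  · have e1 : en! (off! k + i + 1) = (L! k).get ⟨i + 1, hlast⟩ := by
      rw [show off! k + i + 1 = off! k + (i + 1) by omega]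
      exact enum_eq b C uf Df Af hC1 hf k (i + 1) hlast
    rw [e1, enum_eq b C uf Df Af hC1 hf k i hi]
    exact (List.pairwise_iff_get.mp (sorted_Lk b C uf Df Af hC1 hC hf k))
      ⟨i, hi⟩ ⟨i + 1, hlast⟩ (by simp)
  · have hlen : i + 1 = (L! k).length := by omega
    have hpos : 0 < (L! (k + 1)).length := by
      rw [len_Lk b C uf Df Af hC1 hf (k + 1)]; omega
    have e1 : en! (off! k + i + 1) = (L! (k + 1)).get ⟨0, hpos⟩ := by
      have : off! k + i + 1 = off! (k + 1) + 0 := by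
        rw [off_succ]; omega
      rw [this]
      exact enum_eq b C uf Df Af hC1 hf (k + 1) 0 hpos
    have h1 : en! (off! k + i + 1) ∈ D! (k + 1) ∨ en! (off! k + i + 1) = q! (k + 1) := by
      rw [e1]
      exact (mem_Lk b C uf Df Af hC1 hf (k + 1) _).mp (List.get_mem _ _)
    have h2 := enum_mem_chunk b C uf Df Af hC1 hf k i hi
    exact chunk_lt b C uf Df Af hC1 hC hf (Nat.lt_succ_self k) h1 h2

end Perm

end GreedyBasis
namespace GreedyBasis

set_option linter.unusedSectionVars false

section Sums

variable [CompleteSpace X] (b : GreedyBasis 𝕜 X) (C : ℝ) (uf : Finset ℕ → ℝ → X)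
  (Df Af : Finset ℕ → ℝ → Finset ℕ)

local notation "F!" => Fk b C uf Df
local notation "ε!" => εk b C uf Df
local notation "K!" => Kk b C uf Df
local notation "u!" => uk b C uf Df
local notation "D!" => Dk b C uf Df
local notation "A!" => Ak b C uf Df Af
local notation "q!" => qk b C uf Df
local notation "θ!" => θk b C uf Df
local notation "μ!" => μk b C uf Df
local notation "y!" => yk b C uf Df
local notation "x!" => xx b C uf Df
local notation "L!" => Lk b C uf Df Af
local notation "off!" => off b C uf Df Af
local notation "en!" => enum b C uf Df Af

variable (hC1 : 1 ≤ C)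
  (hC : ∀ (j : ℕ) (x : X), ‖b.coeff j x‖ ≤ C * ‖x‖)
  (hf : ∀ F K, 0 ≤ K → (‖uf F K‖ = 1 ∧
    (∀ j ∉ Df F K, b.coeff j (uf F K) = 0) ∧
    (∀ j ∈ Df F K, b.coeff j (uf F K) ≠ 0) ∧
    Disjoint (Df F K) F ∧ Af F K ⊆ Df F K ∧ b.GSet (uf F K) (Af F K) ∧
    K < ‖b.S (Af F K) (uf F K)‖))

include hC1 hf

private lemma sum_take (f : ℕ → X) (k : ℕ) :
    ∀ m, m ≤ (L! k).length →
      ∑ i ∈ Finset.range m, f (en! (off! k + i)) = (((L! k).map f).take m).sum := by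
  intro m
  induction m with
  | zero => intro _; simp
  | succ m ih =>
      intro hm
      have hm' : m < (L! k).length := by omega
      have hmm : m < ((L! k).map f).length := by simpa using hm'
      rw [Finset.sum_range_succ, ih (by omega), List.sum_take_succ _ m hmm]
      congr 1
      rw [enum_eq b C uf Df Af hC1 hf k m hm']
      simp [List.get_eq_getElem, List.getElem_map]

private lemma sortA_map_sum (f : ℕ → X) (k : ℕ) :
    (((A! k).toList.mergeSort (sKey b C uf Df)).map f).sum = ∑ j ∈ A! k, f j := by
  rw [List.Perm.sum_eq (List.Perm.map f (List.mergeSort_perm _ _)), Finset.sum_map_toList]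

private lemma sortR_map_sum (f : ℕ → X) (k : ℕ) :
    ((((D! k) \ (A! k)).toList.mergeSort (sKey b C uf Df)).map f).sum
      = ∑ j ∈ (D! k) \ (A! k), f j := by
  rw [List.Perm.sum_eq (List.Perm.map f (List.mergeSort_perm _ _)), Finset.sum_map_toList]

private lemma sum_A (f : ℕ → X) (k : ℕ) :
    ∑ i ∈ Finset.range (A! k).card, f (en! (off! k + i)) = ∑ j ∈ A! k, f j := by
  have hAD : A! k ⊆ D! k := (spec b C uf Df Af hC1 hf k).2.2.2.2.1
  have hlen : (A! k).card ≤ (L! k).length := by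
    rw [len_Lk b C uf Df Af hC1 hf k]
    have := Finset.card_le_card hAD
    omega
  rw [sum_take b C uf Df Af hC1 hf f k _ hlen]
  have h1 : (L! k).map f = ((A! k).toList.mergeSort (sKey b C uf Df)).map f
      ++ (((((D! k) \ (A! k)).toList.mergeSort (sKey b C uf Df)) ++ [q! k]).map f) := by
    simp [Lk, List.map_append, List.append_assoc]
  have h2 : (A! k).card = (((A! k).toList.mergeSort (sKey b C uf Df)).map f).length := by
    simp
  rw [h1, h2, List.take_left]
  exact sortA_map_sum b C uf Df Af hC1 hf f k

private lemma sum_chunk (f : ℕ → X) (k : ℕ) :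
    ∑ i ∈ Finset.range (L! k).length, f (en! (off! k + i))
      = (∑ j ∈ D! k, f j) + f (q! k) := by
  have hAD : A! k ⊆ D! k := (spec b C uf Df Af hC1 hf k).2.2.2.2.1
  rw [sum_take b C uf Df Af hC1 hf f k _ (le_refl _)]
  rw [show (L! k).length = ((L! k).map f).length by simp, List.take_length]
  simp only [Lk, List.map_append, List.sum_append, List.map_singleton,
    List.sum_singleton]
  rw [sortA_map_sum b C uf Df Af hC1 hf f k, sortR_map_sum b C uf Df Af hC1 hf f k]
  have h := Finset.sum_sdiff (f := f) hAD
  rw [← h]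
  abel

private lemma sum_off (f : ℕ → X) (k : ℕ) :
    ∑ n ∈ Finset.range (off! k), f (en! n)
      = ∑ i ∈ Finset.range k, ((∑ j ∈ D! i, f j) + f (q! i)) := by
  induction k with
  | zero => simp [off]
  | succ k ih =>
      rw [off_succ, Finset.sum_range_add, ih, Finset.sum_range_succ,
        sum_chunk b C uf Df Af hC1 hf f k]

include hC in
private lemma geom_bound (k : ℕ) :
    ∑ i ∈ Finset.range k, (1 + C) * (2:ℝ)⁻¹ ^ (i + 1) ≤ 1 + C := by
  have h1 : ∑ i ∈ Finset.range k, (1 + C) * (2:ℝ)⁻¹ ^ (i + 1)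
      = (1 + C) * (2⁻¹ * ∑ i ∈ Finset.range k, (2:ℝ)⁻¹ ^ i) := by
    rw [Finset.mul_sum, Finset.mul_sum]
    refine Finset.sum_congr rfl fun i _ => ?_
    rw [pow_succ]; ring
  rw [h1]
  have h2 : ∑ i ∈ Finset.range k, (2:ℝ)⁻¹ ^ i ≤ 2 := by
    have := sum_geometric_two_le k
    simpa [one_div] using this
  nlinarith

include hC in
private lemma prefix_bound (k : ℕ) : ‖∑ i ∈ Finset.range k, y! i‖ ≤ 1 + C := by
  calc ‖∑ i ∈ Finset.range k, y! i‖ ≤ ∑ i ∈ Finset.range k, ‖y! i‖ :=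
        norm_sum_le _ _
    _ ≤ ∑ i ∈ Finset.range k, (1 + C) * (2:ℝ)⁻¹ ^ (i + 1) :=
        Finset.sum_le_sum fun i _ => ynorm b C uf Df Af hC1 hC hf i
    _ ≤ 1 + C := geom_bound b C uf Df Af hC1 hC hf k

include hC in
private lemma x_greedy (π : Equiv.Perm ℕ) (hπ : ∀ n, π n = en! n) :
    b.Greedy x! π := by
  intro n
  rw [hπ, hπ]
  exact greedy_lvl b C uf Df Af hC1 hC hf n

include hC in
private lemma blowup (π : Equiv.Perm ℕ) (hπ : ∀ n, π n = en! n) (k : ℕ) :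
    (k : ℝ) - (1 + C) ≤ ‖b.G (off! k + (A! k).card) π x!‖ := by
  have hAD : A! k ⊆ D! k := (spec b C uf Df Af hC1 hf k).2.2.2.2.1
  set f : ℕ → X := fun n => b.coeff n x! • b.e n with hfdef
  have hG : b.G (off! k + (A! k).card) π x!
      = ∑ n ∈ Finset.range (off! k + (A! k).card), f (en! n) := by
    rw [G]
    exact Finset.sum_congr rfl fun n _ => by rw [hπ n]
  have hDsum : ∀ i, ∑ j ∈ D! i, f j = ((ε! i : ℝ) : 𝕜) • u! i := by
    intro i
    have h1 : ∀ j ∈ D! i, f j = ((ε! i : ℝ) : 𝕜) • (b.coeff j (u! i) • b.e j) := by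
      intro j hj
      show b.coeff j x! • b.e j = _
      rw [coeff_xx_D b C uf Df Af hC1 hC hf hj, mul_smul]
    rw [Finset.sum_congr rfl h1, ← Finset.smul_sum]
    congr 1
    rw [← S_apply]
    exact S_eq_self b ((spec b C uf Df Af hC1 hf i).2.1)
  have hqsum : ∀ i, f (q! i) = ((μk b C uf Df i : ℝ) : 𝕜) • b.e (q! i) := by
    intro i
    show b.coeff (q! i) x! • b.e (q! i) = _
    rw [coeff_xx_q b C uf Df Af hC1 hC hf i]
  have hAsum : ∑ j ∈ A! k, f j = ((ε! k : ℝ) : 𝕜) • b.S (A! k) (u! k) := by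
    have h1 : ∀ j ∈ A! k, f j = ((ε! k : ℝ) : 𝕜) • (b.coeff j (u! k) • b.e j) := by
      intro j hj
      show b.coeff j x! • b.e j = _
      rw [coeff_xx_D b C uf Df Af hC1 hC hf (hAD hj), mul_smul]
    rw [Finset.sum_congr rfl h1, ← Finset.smul_sum, ← S_apply]
  have hsplit : ∑ n ∈ Finset.range (off! k + (A! k).card), f (en! n)
      = (∑ i ∈ Finset.range k, y! i) + ((ε! k : ℝ) : 𝕜) • b.S (A! k) (u! k) := by
    rw [Finset.sum_range_add, sum_off b C uf Df Af hC1 hf f k,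
      sum_A b C uf Df Af hC1 hf f k, hAsum]
    congr 1
    refine Finset.sum_congr rfl fun i _ => ?_
    rw [hDsum i, hqsum i, yk]
  have hεS : (k : ℝ) ≤ ‖((ε! k : ℝ) : 𝕜) • b.S (A! k) (u! k)‖ := by
    have h1 : K! k < ‖b.S (A! k) (u! k)‖ := (spec b C uf Df Af hC1 hf k).2.2.2.2.2.2
    have hε := εpos b C uf Df Af hC1 hf k
    have h2 : ε! k * K! k = k := by
      rw [Kk]; field_simp
    rw [norm_smul, RCLike.norm_ofReal, abs_of_pos hε]
    nlinarith
  have hpre := prefix_bound b C uf Df Af hC1 hC hf k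
  rw [hG, hsplit]
  have h3 : ‖((ε! k : ℝ) : 𝕜) • b.S (A! k) (u! k)‖
      ≤ ‖(∑ i ∈ Finset.range k, y! i) + ((ε! k : ℝ) : 𝕜) • b.S (A! k) (u! k)‖
        + ‖∑ i ∈ Finset.range k, y! i‖ := by
    have h4 := norm_sub_le ((∑ i ∈ Finset.range k, y! i)
      + ((ε! k : ℝ) : 𝕜) • b.S (A! k) (u! k)) (∑ i ∈ Finset.range k, y! i)
    rw [add_sub_cancel_left] at h4
    linarith
  linarith

end Sums

end GreedyBasis
/-- If the thresholding greedy algorithm converges for every `x` (and every greedy ordering),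
then it is uniformly bounded: there is `K` with `‖G_N(x)‖ ≤ K ‖x‖` for all `x`, `N`, and all
greedy orderings. -/
theorem stmt0 [CompleteSpace X] (b : GreedyBasis 𝕜 X)
    (hconv : ∀ (x : X) (π : Equiv.Perm ℕ), b.Greedy x π →
      Tendsto (fun N => b.G N π x) atTop (nhds x)) :
    ∃ K : ℝ, ∀ (x : X) (π : Equiv.Perm ℕ), b.Greedy x π →
      ∀ N : ℕ, ‖b.G N π x‖ ≤ K * ‖x‖ := by
  by_contra hcon
  push_neg at hcon
  obtain ⟨C, hC1, hC⟩ := GreedyBasis.coeff_bound b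
  have hgs : ∀ K : ℝ, ∃ (x : X) (A : Finset ℕ), b.GSet x A ∧ K * ‖x‖ < ‖b.S A x‖ :=
    GreedyBasis.neg_to_gset b hcon
  have hsup := GreedyBasis.supply b hC1 hC hgs
  have hsup' : ∀ (F : Finset ℕ) (K : ℝ), ∃ (u : X) (D A : Finset ℕ),
      0 ≤ K → (‖u‖ = 1 ∧ (∀ j ∉ D, b.coeff j u = 0) ∧ (∀ j ∈ D, b.coeff j u ≠ 0) ∧
        Disjoint D F ∧ A ⊆ D ∧ b.GSet u A ∧ K < ‖b.S A u‖) := by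
    intro F K
    by_cases hK : 0 ≤ K
    · obtain ⟨u, D, A, h⟩ := hsup F K hK
      exact ⟨u, D, A, fun _ => h⟩
    · exact ⟨0, ∅, ∅, fun h => absurd h hK⟩
  choose uf Df Af hf using hsup'
  set π : Equiv.Perm ℕ := Equiv.ofBijective (GreedyBasis.enum b C uf Df Af)
    ⟨GreedyBasis.enum_inj b C uf Df Af hC1 hf,
      GreedyBasis.enum_surj b C uf Df Af hC1 hf⟩ with hπdef
  have hπ : ∀ n, π n = GreedyBasis.enum b C uf Df Af n := fun n => rfl
  have hgreedy : b.Greedy (GreedyBasis.xx b C uf Df) π :=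
    GreedyBasis.x_greedy b C uf Df Af hC1 hC hf π hπ
  have htend := hconv _ π hgreedy
  obtain ⟨B, hB⟩ := htend.norm.bddAbove_range
  obtain ⟨k, hk⟩ := exists_nat_gt (B + (1 + C))
  have h1 := GreedyBasis.blowup b C uf Df Af hC1 hC hf π hπ k
  have h2 : ‖b.G (GreedyBasis.off b C uf Df Af k
      + (GreedyBasis.Ak b C uf Df Af k).card) π (GreedyBasis.xx b C uf Df)‖ ≤ B :=
    hB ⟨_, rfl⟩
  linarith
end
end

section
/- Let (e_j) be a quasi-greedy basis of a Banach space X with quasi-greedy constant K. Then for every N there exist disjoint finite sets A, B of natural numbers with |A| = |B| ≤ N such that ‖Σ_{j∈A} e_j‖ / ‖Σ_{j∈B} e_j‖ ≥ μ(N)/(3K), where μ(N) = sup_{n≤N} h_r(n)/h_l(n), h_r(n) = sup_{|A|=n} ‖Σ_{j∈A} e_j‖, h_l(n) = inf_{|A|=n} ‖Σ_{j∈A} e_j‖. -/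
open Finset NNReal ENNReal Filter

noncomputable section

variable (𝕜 X : Type*) [RCLike 𝕜] [NormedAddCommGroup X] [NormedSpace 𝕜 X]

variable {𝕜 X}

section Aux

variable {𝕜 X : Type*} [RCLike 𝕜] [NormedAddCommGroup X] [NormedSpace 𝕜 X]

lemma coeff_indicator (b : GreedyBasis 𝕜 X) (A : Finset ℕ) (j : ℕ) :
    b.coeff j (∑ i ∈ A, b.e i) = if j ∈ A then 1 else 0 := by
  rw [map_sum]
  simp only [b.biorth]
  exact Finset.sum_ite_eq A j (fun _ => (1 : 𝕜))

/-- There is a permutation of `ℕ` that lists `C` first, then `A \ C`, then the complement. -/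
lemma exists_perm (A C : Finset ℕ) (hCA : C ⊆ A) :
    ∃ π : Equiv.Perm ℕ, (∀ k, k < C.card → π k ∈ C) ∧ (∀ k, k < A.card → π k ∈ A) ∧
      (∀ k, A.card ≤ k → π k ∉ A) := by
  classical
  set l := C.sort (· ≤ ·) ++ (A \ C).sort (· ≤ ·) with hldef
  have hCA' : C.card ≤ A.card := Finset.card_le_card hCA
  have hlen : l.length = A.card := by
    simp only [hldef, List.length_append, Finset.length_sort, Finset.card_sdiff_of_subset hCA]
    omega
  have hnodup : l.Nodup := by
    refine List.Nodup.append (C.sort_nodup _) ((A \ C).sort_nodup _) ?_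
    intro x hx hx'
    have h1 : x ∈ C := (Finset.mem_sort _).1 hx
    have h2 : x ∈ A \ C := (Finset.mem_sort _).1 hx'
    exact (Finset.mem_sdiff.1 h2).2 h1
  have hmemA : ∀ x ∈ l, x ∈ A := by
    intro x hx
    rcases List.mem_append.1 hx with h | h
    · exact hCA ((Finset.mem_sort _).1 h)
    · exact (Finset.mem_sdiff.1 ((Finset.mem_sort _).1 h)).1
  have hgetC : ∀ (k : ℕ) (h : k < l.length), k < C.card → l[k] ∈ C := by
    intro k h hk
    have hk' : k < (C.sort (· ≤ ·)).length := by rwa [Finset.length_sort]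
    have : l[k] = (C.sort (· ≤ ·))[k] := List.getElem_append_left hk'
    rw [this]
    exact (Finset.mem_sort _).1 (List.getElem_mem hk')
  -- the middle bijection
  haveI : Infinite {a : ℕ // ¬ a ∈ Finset.range A.card} :=
    Set.infinite_coe_iff.2 ((Finset.range A.card).finite_toSet.infinite_compl)
  haveI : Infinite {a : ℕ // ¬ a ∈ A} :=
    Set.infinite_coe_iff.2 (A.finite_toSet.infinite_compl)
  obtain ⟨d₁⟩ := nonempty_denumerable {a : ℕ // ¬ a ∈ Finset.range A.card}
  obtain ⟨d₂⟩ := nonempty_denumerable {a : ℕ // ¬ a ∈ A}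
  let b₂ : {a : ℕ // ¬ a ∈ Finset.range A.card} ≃ {a : ℕ // ¬ a ∈ A} :=
    (@Denumerable.eqv _ d₁).trans (@Denumerable.eqv _ d₂).symm
  let f : {a : ℕ // a ∈ Finset.range A.card} → {a : ℕ // a ∈ A} := fun x =>
    ⟨l[x.1]'(by rw [hlen]; exact Finset.mem_range.1 x.2),
      hmemA _ (List.getElem_mem _)⟩
  have hfinj : Function.Injective f := by
    intro x y hxy
    have hv : l[(x : ℕ)]'(by rw [hlen]; exact Finset.mem_range.1 x.2)
        = l[(y : ℕ)]'(by rw [hlen]; exact Finset.mem_range.1 y.2) :=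
      congrArg Subtype.val hxy
    exact Subtype.ext (hnodup.getElem_inj_iff.1 hv)
  have hcardeq : Fintype.card {a : ℕ // a ∈ Finset.range A.card} =
      Fintype.card {a : ℕ // a ∈ A} := by
    rw [Fintype.card_coe, Fintype.card_coe, Finset.card_range]
  have hfbij : Function.Bijective f :=
    (Fintype.bijective_iff_injective_and_card f).2 ⟨hfinj, hcardeq⟩
  let b₁ : {a : ℕ // a ∈ Finset.range A.card} ≃ {a : ℕ // a ∈ A} := Equiv.ofBijective f hfbij
  refine ⟨Equiv.subtypeCongr b₁ b₂, ?_, ?_, ?_⟩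
  · intro k hk
    have hkA : k < A.card := lt_of_lt_of_le hk hCA'
    have hkr : k ∈ Finset.range A.card := Finset.mem_range.2 hkA
    have : Equiv.subtypeCongr b₁ b₂ k = (b₁ ⟨k, hkr⟩ : ℕ) := by
      simp [Equiv.subtypeCongr, Equiv.sumCompl_symm_apply_of_pos hkr]
    rw [this]
    exact hgetC k (by rw [hlen]; exact hkA) hk
  · intro k hk
    have hkr : k ∈ Finset.range A.card := Finset.mem_range.2 hk
    have : Equiv.subtypeCongr b₁ b₂ k = (b₁ ⟨k, hkr⟩ : ℕ) := by
      simp [Equiv.subtypeCongr, Equiv.sumCompl_symm_apply_of_pos hkr]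
    rw [this]
    exact (b₁ ⟨k, hkr⟩).2
  · intro k hk
    have hkr : ¬ k ∈ Finset.range A.card := by simp [Finset.mem_range]; omega
    have : Equiv.subtypeCongr b₁ b₂ k = (b₂ ⟨k, hkr⟩ : ℕ) := by
      simp [Equiv.subtypeCongr, Equiv.sumCompl_symm_apply_of_neg hkr]
    rw [this]
    exact (b₂ ⟨k, hkr⟩).2

/-- Key consequence of quasi-greediness: projections of indicator sums are bounded. -/
lemma norm_indicator_subset_le (b : GreedyBasis 𝕜 X) {K : ℝ≥0} (hK : b.QuasiGreedy K)
    {A C : Finset ℕ} (hCA : C ⊆ A) :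
    ‖∑ j ∈ C, b.e j‖ ≤ K * ‖∑ j ∈ A, b.e j‖ := by
  classical
  obtain ⟨π, h1, h2, h3⟩ := exists_perm A C hCA
  set x : X := ∑ j ∈ A, b.e j with hx
  have hcoeff : ∀ j, b.coeff j x = if j ∈ A then 1 else 0 := fun j => coeff_indicator b A j
  have hmem_iff : ∀ k, π k ∈ A ↔ k < A.card := by
    intro k
    constructor
    · intro h
      by_contra hc
      exact h3 k (by omega) h
    · exact h2 k
  have hg : b.Greedy x π := by
    intro k
    by_cases h : π (k + 1) ∈ A
    · have hk1 : k + 1 < A.card := (hmem_iff (k + 1)).1 h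
      have hk : π k ∈ A := h2 k (by omega)
      rw [hcoeff, hcoeff, if_pos h, if_pos hk]
    · rw [hcoeff, if_neg h]
      simp
  have hG : b.G C.card π x = ∑ j ∈ C, b.e j := by
    rw [GreedyBasis.G]
    have himg : (Finset.range C.card).image π = C := by
      apply Finset.eq_of_subset_of_card_le
      · intro j hj
        obtain ⟨k, hk, rfl⟩ := Finset.mem_image.1 hj
        exact h1 k (Finset.mem_range.1 hk)
      · rw [Finset.card_image_of_injective _ π.injective, Finset.card_range]
    calc ∑ k ∈ Finset.range C.card, b.coeff (π k) x • b.e (π k)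
        = ∑ k ∈ Finset.range C.card, b.e (π k) := by
          refine Finset.sum_congr rfl fun k hk => ?_
          have : π k ∈ A := h2 k (lt_of_lt_of_le (Finset.mem_range.1 hk) (Finset.card_le_card hCA))
          rw [hcoeff, if_pos this, one_smul]
      _ = ∑ j ∈ (Finset.range C.card).image π, b.e j :=
          (Finset.sum_image (fun a _ c _ h => π.injective h)).symm
      _ = ∑ j ∈ C, b.e j := by rw [himg]
  have := hK x π hg C.card
  rwa [hG] at this

lemma one_le_K (b : GreedyBasis 𝕜 X) {K : ℝ≥0} (hK : b.QuasiGreedy K) : (1 : ℝ) ≤ K := by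
  have h := norm_indicator_subset_le b hK (A := {0}) (C := {0}) subset_rfl
  simpa [b.norm_e] using h

lemma one_le_K_mul (b : GreedyBasis 𝕜 X) {K : ℝ≥0} (hK : b.QuasiGreedy K)
    {A : Finset ℕ} (hA : A.Nonempty) : (1 : ℝ) ≤ K * ‖∑ j ∈ A, b.e j‖ := by
  obtain ⟨j, hj⟩ := hA
  have h := norm_indicator_subset_le b hK (A := A) (C := {j}) (Finset.singleton_subset_iff.2 hj)
  simpa [b.norm_e] using h

lemma norm_indicator_le_card (b : GreedyBasis 𝕜 X) (A : Finset ℕ) :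
    ‖∑ j ∈ A, b.e j‖ ≤ A.card := by
  calc ‖∑ j ∈ A, b.e j‖ ≤ ∑ j ∈ A, ‖b.e j‖ := norm_sum_le _ _
    _ = A.card := by simp [b.norm_e]

lemma keyineq {K l r ε : ℝ} (hK0 : 0 < K) (hl0 : 0 < l) (hε0 : 0 < ε)
    (h3 : K * (ε * (6 * l + 3 * K * l + r)) ≤ K * (3 * l * (2 / 3 * r - K * l))) :
    r * (K * (l + ε)) ≤ 3 * K * l * (r - ε - K * (l + ε)) := by
  nlinarith [mul_nonneg (mul_nonneg hK0.le hl0.le) hε0.le]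

lemma ofReal_norm_eq_coe_nnnorm {E : Type*} [SeminormedAddCommGroup E] (a : E) :
    ENNReal.ofReal ‖a‖ = (‖a‖₊ : ℝ≥0∞) :=
  ENNReal.ofReal_eq_coe_nnreal (norm_nonneg a)

end Aux


/-- For a quasi-greedy basis with constant `K`, for every `N` there are disjoint sets
`A, B` with `|A| = |B| ≤ N` and `‖1_A‖ / ‖1_B‖ ≥ μ(N) / (3K)`. -/
theorem stmt2 (b : GreedyBasis 𝕜 X) (K : ℝ≥0) (hK : b.QuasiGreedy K) (N : ℕ) (hN : 1 ≤ N) :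
    ∃ A B : Finset ℕ, Disjoint A B ∧ A.card = B.card ∧ A.card ≤ N ∧
      b.μ N / (3 * (K : ℝ≥0∞)) ≤
        (‖∑ j ∈ A, b.e j‖₊ : ℝ≥0∞) / (‖∑ j ∈ B, b.e j‖₊ : ℝ≥0∞) := by
  classical
  have hK1 : (1 : ℝ) ≤ K := one_le_K b hK
  have hK0 : (0 : ℝ) < K := by linarith
  -- the sup defining μ is attained at some n ∈ [1, N]
  obtain ⟨n, hn, hμ⟩ : ∃ n ∈ Finset.Icc 1 N, b.μ N = b.hr n / b.hl n := by
    obtain ⟨n, hn, h⟩ := Finset.exists_mem_eq_sup (Finset.Icc 1 N)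
      ⟨1, by simp [hN]⟩ (fun n => b.hr n / b.hl n)
    refine ⟨n, hn, ?_⟩
    rw [GreedyBasis.μ, ← Finset.sup_eq_iSup]
    exact h
  obtain ⟨hn1, hnN⟩ := Finset.mem_Icc.1 hn
  -- basic norm bounds
  have hlb : ∀ A : Finset ℕ, A.card = n → (1 : ℝ) ≤ K * ‖∑ j ∈ A, b.e j‖ := by
    intro A hA
    exact one_le_K_mul b hK (Finset.card_pos.1 (hA ▸ hn1))
  have hlownorm : ∀ A : Finset ℕ, A.card = n → (1 : ℝ) / K ≤ ‖∑ j ∈ A, b.e j‖ := by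
    intro A hA
    rw [div_le_iff₀ hK0]
    nlinarith [hlb A hA]
  -- hl and hr are finite and hl is positive
  have hl_ne_top : b.hl n ≠ ⊤ := by
    have : b.hl n ≤ (‖∑ j ∈ Finset.range n, b.e j‖₊ : ℝ≥0∞) := by
      refine iInf_le_of_le (Finset.range n) ?_
      exact iInf_le_of_le (Finset.card_range n) le_rfl
    exact ne_top_of_le_ne_top ENNReal.coe_ne_top this
  have hr_le : b.hr n ≤ ENNReal.ofReal n := by
    refine iSup₂_le fun A hA => ?_
    rw [← ofReal_norm_eq_coe_nnnorm]
    exact ENNReal.ofReal_le_ofReal (by simpa [hA] using norm_indicator_le_card b A)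
  have hr_ne_top : b.hr n ≠ ⊤ := ne_top_of_le_ne_top ENNReal.ofReal_ne_top hr_le
  have hl_lb : ENNReal.ofReal ((1 : ℝ) / K) ≤ b.hl n := by
    refine le_iInf₂ fun A hA => ?_
    rw [← ofReal_norm_eq_coe_nnnorm]
    exact ENNReal.ofReal_le_ofReal (hlownorm A hA)
  set r : ℝ := (b.hr n).toReal with hrdef
  set l : ℝ := (b.hl n).toReal with hldef2
  have hr_eq : b.hr n = ENNReal.ofReal r := (ENNReal.ofReal_toReal hr_ne_top).symm
  have hl_eq : b.hl n = ENNReal.ofReal l := (ENNReal.ofReal_toReal hl_ne_top).symm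
  have hl_pos : (1 : ℝ) / K ≤ l := by
    have := ENNReal.toReal_mono hl_ne_top hl_lb
    rwa [ENNReal.toReal_ofReal (by positivity)] at this
  have hl0 : (0 : ℝ) < l := lt_of_lt_of_le (by positivity) hl_pos
  have hlr : l ≤ r := by
    refine ENNReal.toReal_mono hr_ne_top ?_
    refine le_trans ?_ (le_iSup₂ (f := fun (A : Finset ℕ) (_ : A.card = n) =>
      (‖∑ j ∈ A, b.e j‖₊ : ℝ≥0∞)) (Finset.range n) (Finset.card_range n))
    exact iInf₂_le (f := fun (A : Finset ℕ) (_ : A.card = n) =>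
      (‖∑ j ∈ A, b.e j‖₊ : ℝ≥0∞)) (Finset.range n) (Finset.card_range n)
  have hr0 : (0 : ℝ) < r := lt_of_lt_of_le hl0 hlr
  -- characterization of hl / hr as inf / sup
  have hl_le_all : ∀ B : Finset ℕ, B.card = n → l ≤ ‖∑ j ∈ B, b.e j‖ := by
    intro B hB
    have h1 : b.hl n ≤ (‖∑ j ∈ B, b.e j‖₊ : ℝ≥0∞) :=
      iInf₂_le (f := fun (A : Finset ℕ) (_ : A.card = n) =>
        (‖∑ j ∈ A, b.e j‖₊ : ℝ≥0∞)) B hB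
    have := ENNReal.toReal_mono ENNReal.coe_ne_top h1
    simpa using this
  have hr_ge_all : ∀ A : Finset ℕ, A.card = n → ‖∑ j ∈ A, b.e j‖ ≤ r := by
    intro A hA
    have h1 : (‖∑ j ∈ A, b.e j‖₊ : ℝ≥0∞) ≤ b.hr n :=
      le_iSup₂ (f := fun (A : Finset ℕ) (_ : A.card = n) =>
        (‖∑ j ∈ A, b.e j‖₊ : ℝ≥0∞)) A hA
    have := ENNReal.toReal_mono hr_ne_top h1
    simpa using this
  have exB : ∀ ε : ℝ, 0 < ε → ∃ B : Finset ℕ, B.card = n ∧ ‖∑ j ∈ B, b.e j‖ < l + ε := by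
    intro ε hε
    by_contra hc
    push_neg at hc
    have : ENNReal.ofReal (l + ε) ≤ b.hl n := by
      refine le_iInf₂ fun B hB => ?_
      rw [← ofReal_norm_eq_coe_nnnorm]
      exact ENNReal.ofReal_le_ofReal (hc B hB)
    rw [hl_eq, ENNReal.ofReal_le_ofReal_iff hl0.le] at this
    linarith
  have exA : ∀ ε : ℝ, 0 < ε → ε ≤ r →
      ∃ A : Finset ℕ, A.card = n ∧ r - ε < ‖∑ j ∈ A, b.e j‖ := by
    intro ε hε hεr
    by_contra hc
    push_neg at hc
    have : b.hr n ≤ ENNReal.ofReal (r - ε) := by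
      refine iSup₂_le fun A hA => ?_
      rw [← ofReal_norm_eq_coe_nnnorm]
      exact ENNReal.ofReal_le_ofReal (hc A hA)
    rw [hr_eq, ENNReal.ofReal_le_ofReal_iff (by linarith)] at this
    linarith
  -- reduction of the goal to a real inequality
  have final : ∀ A' B' : Finset ℕ, Disjoint A' B' → A'.card = B'.card → A'.card ≤ N →
      0 < ‖∑ j ∈ B', b.e j‖ →
      r * ‖∑ j ∈ B', b.e j‖ ≤ 3 * K * l * ‖∑ j ∈ A', b.e j‖ →
      ∃ A B : Finset ℕ, Disjoint A B ∧ A.card = B.card ∧ A.card ≤ N ∧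
        b.μ N / (3 * (K : ℝ≥0∞)) ≤
          (‖∑ j ∈ A, b.e j‖₊ : ℝ≥0∞) / (‖∑ j ∈ B, b.e j‖₊ : ℝ≥0∞) := by
    intro A' B' hdisj hcards hcardN hy hmain
    refine ⟨A', B', hdisj, hcards, hcardN, ?_⟩
    set x : ℝ := ‖∑ j ∈ A', b.e j‖ with hxdef
    set y : ℝ := ‖∑ j ∈ B', b.e j‖ with hydef
    have h3K : (3 : ℝ≥0∞) * (K : ℝ≥0∞) = ENNReal.ofReal (3 * K) := by
      rw [ENNReal.ofReal_mul (by norm_num)]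
      rw [ENNReal.ofReal_ofNat, ENNReal.ofReal_coe_nnreal]
    have h3K0 : (0 : ℝ) < 3 * K := by linarith
    rw [hμ, hr_eq, hl_eq, h3K, ← ENNReal.ofReal_div_of_pos hl0,
      ← ENNReal.ofReal_div_of_pos h3K0, ← ofReal_norm_eq_coe_nnnorm,
      ← ofReal_norm_eq_coe_nnnorm, ← hxdef, ← hydef, ← ENNReal.ofReal_div_of_pos hy]
    apply ENNReal.ofReal_le_ofReal
    rw [div_div, div_le_div_iff₀ (by positivity) hy]
    nlinarith [hmain]
  by_cases hcase : r ≤ 3 / 2 * K * l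
  · -- trivial case: take A = {0}, B = {1}
    refine final {0} {1} (by simp) (by simp) (by simpa using hN) ?_ ?_
    · simp [Finset.sum_singleton, b.norm_e]
    · simp only [Finset.sum_singleton, b.norm_e]
      nlinarith
  · push_neg at hcase
    -- choose ε
    set slack : ℝ := 2 / 3 * r - K * l with hslackdef
    have hslack : 0 < slack := by rw [hslackdef]; nlinarith
    set D : ℝ := 2 + K + r / (3 * l) with hDdef
    have hD0 : (0 : ℝ) < D := by
      have : 0 < r / (3 * l) := by positivity
      rw [hDdef]; linarith
    have hrl : l < r := by nlinarith
    set ε : ℝ := min (slack / D) ((r - l) / 3) with hεdef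
    have hε0 : 0 < ε := by
      apply lt_min
      · positivity
      · linarith
    have hε1 : ε ≤ slack / D := min_le_left _ _
    have hε2 : ε ≤ (r - l) / 3 := min_le_right _ _
    have hεr : ε ≤ r := by linarith
    obtain ⟨A, hAcard, hAnorm⟩ := exA ε hε0 hεr
    obtain ⟨B, hBcard, hBnorm⟩ := exB ε hε0
    have hAB : A ≠ B := by
      intro h
      rw [h] at hAnorm
      linarith
    have hABdiff : (A \ B).Nonempty := by
      rw [Finset.sdiff_nonempty]
      intro hsub
      exact hAB (Finset.eq_of_subset_of_card_le hsub (by rw [hAcard, hBcard]))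
    have hBAdiff : (B \ A).Nonempty := by
      rw [Finset.sdiff_nonempty]
      intro hsub
      exact hAB (Finset.eq_of_subset_of_card_le hsub (by rw [hAcard, hBcard])).symm
    have hcards : (A \ B).card = (B \ A).card := by
      have h1 := Finset.card_inter_add_card_sdiff A B
      have h2 := Finset.card_inter_add_card_sdiff B A
      rw [Finset.inter_comm B A] at h2
      omega
    have hcardN : (A \ B).card ≤ N := by
      calc (A \ B).card ≤ A.card := Finset.card_le_card (Finset.sdiff_subset)
        _ ≤ N := by omega
    set x : ℝ := ‖∑ j ∈ A \ B, b.e j‖ with hxdef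
    set y : ℝ := ‖∑ j ∈ B \ A, b.e j‖ with hydef
    have hy0 : 0 < y := by
      have h1 := one_le_K_mul b hK hBAdiff
      rw [← hydef] at h1
      nlinarith
    have hyup : y ≤ K * ‖∑ j ∈ B, b.e j‖ :=
      norm_indicator_subset_le b hK (Finset.sdiff_subset)
    have hinter : ‖∑ j ∈ A ∩ B, b.e j‖ ≤ K * ‖∑ j ∈ B, b.e j‖ :=
      norm_indicator_subset_le b hK (Finset.inter_subset_right)
    have hsplit : ‖∑ j ∈ A, b.e j‖ ≤ x + ‖∑ j ∈ A ∩ B, b.e j‖ := by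
      have hsum : ∑ j ∈ A \ B, b.e j + ∑ j ∈ A ∩ B, b.e j = ∑ j ∈ A, b.e j := by
        rw [← Finset.sdiff_inter_self_left A B]
        exact Finset.sum_sdiff (Finset.inter_subset_left)
      calc ‖∑ j ∈ A, b.e j‖ = ‖∑ j ∈ A \ B, b.e j + ∑ j ∈ A ∩ B, b.e j‖ := by rw [hsum]
        _ ≤ x + ‖∑ j ∈ A ∩ B, b.e j‖ := norm_add_le _ _
    -- key numeric bound
    have hkey : ε * (6 * l + 3 * K * l + r) ≤ 3 * l * slack := by
      have hεD : ε * D ≤ slack := by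
        rw [← le_div_iff₀ hD0]; exact hε1
      have hexp : D * (3 * l) = 6 * l + 3 * K * l + r := by
        rw [hDdef, add_mul, div_mul_cancel₀ _ (by positivity)]; ring
      calc ε * (6 * l + 3 * K * l + r) = (ε * D) * (3 * l) := by rw [← hexp]; ring
        _ ≤ slack * (3 * l) := by
            apply mul_le_mul_of_nonneg_right hεD (by positivity)
        _ = 3 * l * slack := by ring
    have hxlow : r - ε - K * (l + ε) ≤ x := by
      have h1 : K * ‖∑ j ∈ B, b.e j‖ ≤ K * (l + ε) :=
        mul_le_mul_of_nonneg_left hBnorm.le hK0.le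
      linarith [hAnorm, hsplit, hinter]
    have hyup2 : y ≤ K * (l + ε) := by
      have h1 : K * ‖∑ j ∈ B, b.e j‖ ≤ K * (l + ε) :=
        mul_le_mul_of_nonneg_left hBnorm.le hK0.le
      linarith
    refine final (A \ B) (B \ A) (disjoint_sdiff_sdiff) hcards hcardN hy0 ?_
    rw [← hxdef, ← hydef]
    have hint1 : r * y ≤ r * (K * (l + ε)) := mul_le_mul_of_nonneg_left hyup2 hr0.le
    have hint2 : 3 * K * l * (r - ε - K * (l + ε)) ≤ 3 * K * l * x :=
      mul_le_mul_of_nonneg_left hxlow (by positivity)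
    have hint3 : K * (ε * (6 * l + 3 * K * l + r)) ≤ K * (3 * l * slack) :=
      mul_le_mul_of_nonneg_left hkey hK0.le
    rw [hslackdef] at hint3
    have hmid : r * (K * (l + ε)) ≤ 3 * K * l * (r - ε - K * (l + ε)) :=
      keyineq hK0 hl0 hε0 hint3
    linarith [hint1, hint2, hmid]
end
end

section
/- For any normalized basis (e_j) of a Banach space X (not necessarily quasi-greedy), the Lebesgue constant satisfies C_N ≥ k_N/4, where k_N = sup_{|A| ≤ N} ‖S_A‖ is the supremum of norms of coordinate projections onto sets of cardinality at most N. -/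
open Finset NNReal ENNReal Filter

noncomputable section

variable (𝕜 X : Type*) [RCLike 𝕜] [NormedAddCommGroup X] [NormedSpace 𝕜 X]

variable {𝕜 X}

/-- `Fin n ⊕ ℕ ≃ ℕ`. -/
def finSumNatEquiv' (n : ℕ) : (Fin n ⊕ ℕ) ≃ ℕ where
  toFun := Sum.elim Fin.val (fun k => n + k)
  invFun m := if h : m < n then Sum.inl ⟨m, h⟩ else Sum.inr (m - n)
  left_inv x := by
    rcases x with ⟨m, h⟩ | k
    · simp [h]
    · simp only [Sum.elim_inr]
      split_ifs with h'
      · omega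
      simp
  right_inv m := by
    dsimp only
    by_cases h : m < n
    · simp [h]
    · rw [dif_neg h]
      simp only [Sum.elim_inr]
      omega

lemma exists_sort_perm (g : ℕ → ℝ) (S : Finset ℕ) (hg0 : ∀ j, 0 ≤ g j)
    (hsupp : ∀ j, j ∉ S → g j = 0) :
    ∃ π : Equiv.Perm ℕ, ∀ k, g (π (k + 1)) ≤ g (π k) := by
  classical
  set n := S.card with hn
  let es : Fin n ≃ {x // x ∈ S} := S.equivFin.symm
  let f : Fin n → ℝ := fun i => -g (es i)
  let σ := Tuple.sort f
  haveI : Infinite {a : ℕ // ¬ a ∈ S} := (S.finite_toSet.infinite_compl).to_subtype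
  haveI : Denumerable {a : ℕ // ¬ a ∈ S} := Denumerable.ofEncodableOfInfinite _
  let E2 : ℕ ≃ {a : ℕ // ¬ a ∈ S} := (Denumerable.eqv _).symm
  let π : Equiv.Perm ℕ :=
    (finSumNatEquiv' n).symm.trans (((σ.trans es).sumCongr E2).trans
      (Equiv.sumCompl (fun a => a ∈ S)))
  have hπlt : ∀ k (h : k < n), π k = ↑(es (σ ⟨k, h⟩)) := by
    intro k h
    simp only [π, Equiv.trans_apply]
    rw [show (finSumNatEquiv' n).symm k = Sum.inl ⟨k, h⟩ by
      simp [finSumNatEquiv', Equiv.symm, h]]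
    simp
  have hπge : ∀ k, n ≤ k → π k ∉ S := by
    intro k h
    simp only [π, Equiv.trans_apply]
    rw [show (finSumNatEquiv' n).symm k = Sum.inr (k - n) by
      simp [finSumNatEquiv', Equiv.symm]; omega]
    simp only [Equiv.sumCongr_apply, Sum.map_inr, Equiv.sumCompl_apply_inr]
    exact (E2 (k - n)).2
  refine ⟨π, fun k => ?_⟩
  by_cases h1 : k + 1 < n
  · have h0 : k < n := by omega
    rw [hπlt _ h1, hπlt _ h0]
    have hmono := Tuple.monotone_sort f
      (show (⟨k, h0⟩ : Fin n) ≤ ⟨k + 1, h1⟩ from by simp)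
    simp only [Function.comp_apply, f] at hmono
    linarith
  · rw [hsupp _ (hπge (k + 1) (by omega))]
    exact hg0 _

lemma greedy_image {g : ℕ → ℝ} {π : Equiv.Perm ℕ} (hmono : ∀ k, g (π (k + 1)) ≤ g (π k))
    {A : Finset ℕ} {t : ℝ} (hA : ∀ j ∈ A, t ≤ g j) (hA' : ∀ j ∉ A, g j < t) :
    A = (Finset.range A.card).image π := by
  classical
  have hanti : Antitone (g ∘ π) := antitone_nat_of_succ_le hmono
  set P := A.image π.symm with hP
  have hmem : ∀ k, k ∈ P ↔ π k ∈ A := by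
    intro k
    simp only [hP, Finset.mem_image]
    constructor
    · rintro ⟨a, ha, rfl⟩; simpa using ha
    · intro h; exact ⟨π k, h, by simp⟩
  have hdc : ∀ k' k, k' ≤ k → k ∈ P → k' ∈ P := by
    intro k' k hle hk
    rw [hmem] at hk ⊢
    by_contra h
    have h1 : g (π k') < t := hA' _ h
    have h2 : t ≤ g (π k) := hA _ hk
    have h3 := hanti hle
    simp only [Function.comp_apply] at h3
    linarith
  have hcard : P.card = A.card := Finset.card_image_of_injective _ π.symm.injective
  have hPr : P = Finset.range A.card := by
    refine Finset.eq_of_subset_of_card_le ?_ (by simp [hcard])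
    intro m hm
    rw [Finset.mem_range]
    by_contra hlt
    push_neg at hlt
    have hsub : Finset.range (m + 1) ⊆ P := by
      intro i hi
      exact hdc i m (by simpa [Nat.lt_succ_iff] using hi) hm
    have := Finset.card_le_card hsub
    simp only [Finset.card_range, hcard] at this
    omega
  have : A = P.image π := by
    rw [hP, Finset.image_image]
    simp
  rw [← hPr]
  exact this


section Aux

variable {𝕜 X : Type*} [RCLike 𝕜] [NormedAddCommGroup X] [NormedSpace 𝕜 X]
variable (b : GreedyBasis 𝕜 X)

lemma coeff_sum (G : Finset ℕ) (d : ℕ → 𝕜) (i : ℕ) :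
    b.coeff i (∑ j ∈ G, d j • b.e j) = if i ∈ G then d i else 0 := by
  classical
  rw [map_sum]
  simp only [map_smul, b.biorth, smul_eq_mul, mul_ite, mul_one, mul_zero]
  rw [Finset.sum_ite_eq G i d]

lemma S_apply (A : Finset ℕ) (y : X) :
    b.S A y = ∑ j ∈ A, b.coeff j y • b.e j := by
  simp [GreedyBasis.S, ContinuousLinearMap.sum_apply]

lemma coeff_S (A : Finset ℕ) (y : X) (i : ℕ) :
    b.coeff i (b.S A y) = if i ∈ A then b.coeff i y else 0 := by
  rw [S_apply, coeff_sum]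

lemma one_le_norm_coeff (j : ℕ) : 1 ≤ ‖b.coeff j‖ := by
  have h := (b.coeff j).unit_le_opNorm (b.e j) (le_of_eq (b.norm_e j))
  rwa [b.biorth j j, if_pos rfl, norm_one] at h

lemma sigma_pos (N : ℕ) (z : X) (T : Finset ℕ) (hT : N + 1 ≤ T.card)
    (hnz : ∀ j ∈ T, b.coeff j z ≠ 0) : b.σ N z ≠ 0 := by
  classical
  have hTne : T.Nonempty := Finset.card_pos.mp (by omega)
  set δ := T.inf' hTne (fun j => ‖b.coeff j z‖ / ‖b.coeff j‖) with hδdef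
  have hδ : 0 < δ := by
    rw [hδdef, Finset.lt_inf'_iff]
    intro j hj
    exact div_pos (norm_pos_iff.mpr (hnz j hj))
      (lt_of_lt_of_le one_pos (one_le_norm_coeff b j))
  have hle : ENNReal.ofReal δ ≤ b.σ N z := by
    rw [GreedyBasis.σ]
    refine le_iInf fun A' => le_iInf fun hA' => le_iInf fun c => ?_
    obtain ⟨j, hjT, hjA⟩ : ∃ j ∈ T, j ∉ A' := by
      by_contra h
      push_neg at h
      exact absurd (Finset.card_le_card h) (by omega)
    set w := z - ∑ i ∈ A', c i • b.e i with hw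
    have h1 : b.coeff j w = b.coeff j z := by
      rw [hw, map_sub, coeff_sum, if_neg hjA, sub_zero]
    have h2 : ‖b.coeff j z‖ ≤ ‖b.coeff j‖ * ‖w‖ := h1 ▸ (b.coeff j).le_opNorm w
    have h5 : (0:ℝ) < ‖b.coeff j‖ := lt_of_lt_of_le one_pos (one_le_norm_coeff b j)
    have h3 : δ ≤ ‖w‖ := by
      calc δ ≤ ‖b.coeff j z‖ / ‖b.coeff j‖ := Finset.inf'_le _ hjT
        _ ≤ ‖w‖ := by rw [div_le_iff₀ h5]; nlinarith
    calc ENNReal.ofReal δ ≤ ENNReal.ofReal ‖w‖ := ENNReal.ofReal_le_ofReal h3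
      _ = (‖w‖₊ : ℝ≥0∞) := ofReal_norm w
  exact ne_of_gt (lt_of_lt_of_le (ENNReal.ofReal_pos.mpr hδ) hle)

lemma le_CN {N : ℕ} {z : X} {π : Equiv.Perm ℕ} (hg : b.Greedy z π) (hσ : b.σ N z ≠ 0) :
    (‖z - b.G N π z‖₊ : ℝ≥0∞) / b.σ N z ≤ b.CN N :=
  le_iSup_of_le z <| le_iSup_of_le π <| le_iSup_of_le hg <| le_iSup_of_le hσ le_rfl

end Aux


section Main

variable {𝕜 X : Type*} [RCLike 𝕜] [NormedAddCommGroup X] [NormedSpace 𝕜 X]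
variable (b : GreedyBasis 𝕜 X)

lemma main' (N : ℕ) (A : Finset ℕ) (hA : A.card = N) (F : Finset ℕ) (a : ℕ → 𝕜)
    (x : X) (hx : x = ∑ j ∈ F, a j • b.e j) :
    (‖x - b.S A x‖₊ : ℝ≥0∞) ≤ b.CN N * ‖x‖₊ := by
  classical
  by_cases hxz : x - b.S A x = 0
  · simp [hxz]
  set t : ℝ := 1 + ∑ j ∈ F, ‖a j‖ with ht
  have hsumnn : (0:ℝ) ≤ ∑ j ∈ F, ‖a j‖ := Finset.sum_nonneg fun j _ => norm_nonneg _
  have ht1 : (1:ℝ) ≤ t := by rw [ht]; linarith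
  have ht0 : (0:ℝ) < t := by linarith
  set u : X := ∑ j ∈ A, ((t : 𝕜)) • b.e j with hu
  set z : X := x - b.S A x + u with hz
  have hax : ∀ i, b.coeff i x = if i ∈ F then a i else 0 := fun i => by
    rw [hx, coeff_sum]
  have hcz : ∀ i, b.coeff i z = if i ∈ A then (t:𝕜) else b.coeff i x := by
    intro i
    rw [hz, map_add, map_sub, coeff_S, hu, coeff_sum]
    by_cases h : i ∈ A <;> simp [h]
  set g : ℕ → ℝ := fun i => ‖b.coeff i z‖ with hg
  have hgA : ∀ i ∈ A, g i = t := by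
    intro i hi
    rw [hg]
    simp only
    rw [hcz, if_pos hi, RCLike.norm_ofReal, abs_of_pos ht0]
  have hgA' : ∀ i ∉ A, g i < t := by
    intro i hi
    rw [hg]
    simp only
    rw [hcz, if_neg hi, hax]
    by_cases h : i ∈ F
    · rw [if_pos h]
      have := Finset.single_le_sum (f := fun j => ‖a j‖) (fun j _ => norm_nonneg _) h
      rw [ht]; linarith
    · rw [if_neg h, norm_zero]; exact ht0
  have hsupp : ∀ i, i ∉ A ∪ F → g i = 0 := by
    intro i hi
    rw [Finset.mem_union] at hi; push_neg at hi
    rw [hg]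
    simp only
    rw [hcz, if_neg hi.1, hax, if_neg hi.2, norm_zero]
  obtain ⟨π, hπ⟩ := exists_sort_perm g (A ∪ F) (fun j => norm_nonneg _) hsupp
  have hGreedy : b.Greedy z π := hπ
  have hAeq : A = (Finset.range N).image π := by
    have h := greedy_image hπ (fun j hj => (hgA j hj).ge) hgA'
    rwa [hA] at h
  have hπmem : ∀ k ∈ Finset.range N, π k ∈ A := fun k hk => by
    rw [hAeq]; exact Finset.mem_image_of_mem _ hk
  have hG : b.G N π z = u := by
    rw [GreedyBasis.G, hu, hAeq, Finset.sum_image (fun x _ y _ h => π.injective h)]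
    exact Finset.sum_congr rfl fun k hk => by rw [hcz, if_pos (hπmem k hk)]
  have hrem : z - b.G N π z = x - b.S A x := by rw [hG, hz]; abel
  have hσ_ub : b.σ N z ≤ (‖x‖₊ : ℝ≥0∞) := by
    rw [GreedyBasis.σ]
    refine iInf_le_of_le A (iInf_le_of_le hA.le
      (iInf_le_of_le (fun j => (t:𝕜) - b.coeff j x) ?_))
    have heq : z - ∑ j ∈ A, ((t:𝕜) - b.coeff j x) • b.e j = x := by
      simp only [sub_smul, Finset.sum_sub_distrib]
      rw [hz, hu, ← S_apply]
      abel
    rw [heq]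
  have hσ_top : b.σ N z ≠ ⊤ := ne_top_of_le_ne_top ENNReal.coe_ne_top hσ_ub
  have hσ_ne : b.σ N z ≠ 0 := by
    have hxs : x - b.S A x = ∑ j ∈ F \ A, a j • b.e j := by
      have h1 : b.S A x = ∑ j ∈ A ∩ F, a j • b.e j := by
        rw [S_apply, show (∑ j ∈ A, b.coeff j x • b.e j)
            = ∑ j ∈ A, (if j ∈ F then a j • b.e j else 0) from
          Finset.sum_congr rfl fun j _ => by rw [hax, ite_smul, zero_smul]]
        rw [Finset.sum_ite_mem]
      have h2 : F \ (A ∩ F) = F \ A := by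
        ext i
        simp only [Finset.mem_sdiff, Finset.mem_inter]
        tauto
      rw [h1, hx, ← Finset.sum_sdiff_eq_sub Finset.inter_subset_right, h2]
    obtain ⟨i, hiFA, hia⟩ : ∃ i ∈ F \ A, a i ≠ 0 := by
      by_contra h
      push_neg at h
      exact hxz (by
        rw [hxs]
        exact Finset.sum_eq_zero fun j hj => by rw [h j hj, zero_smul])
    have hiA : i ∉ A := (Finset.mem_sdiff.mp hiFA).2
    have hiF : i ∈ F := (Finset.mem_sdiff.mp hiFA).1
    refine sigma_pos b N z (insert i A) ?_ ?_
    · rw [Finset.card_insert_of_notMem hiA, hA]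
    · intro j hj
      rcases Finset.mem_insert.mp hj with rfl | hjA
      · rw [hcz, if_neg hiA, hax, if_pos hiF]; exact hia
      · rw [hcz, if_pos hjA]
        simp only [ne_eq, RCLike.ofReal_eq_zero]
        linarith
  have hle := le_CN b hGreedy hσ_ne
  rw [hrem, ENNReal.div_le_iff_le_mul (Or.inl hσ_ne) (Or.inl hσ_top)] at hle
  calc (‖x - b.S A x‖₊ : ℝ≥0∞) ≤ b.CN N * b.σ N z := hle
    _ ≤ b.CN N * (‖x‖₊ : ℝ≥0∞) := mul_le_mul_right hσ_ub _

lemma main (N : ℕ) (A : Finset ℕ) (hA : A.card ≤ N) (F : Finset ℕ) (a : ℕ → 𝕜)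
    (x : X) (hx : x = ∑ j ∈ F, a j • b.e j) :
    (‖x - b.S A x‖₊ : ℝ≥0∞) ≤ b.CN N * ‖x‖₊ := by
  classical
  obtain ⟨pad, hpadsub, hpadcard⟩ :=
    Set.Infinite.exists_subset_card_eq ((A ∪ F).finite_toSet.infinite_compl) (N - A.card)
  have hpad : ∀ i ∈ pad, i ∉ A ∪ F := by
    intro i hi
    have := hpadsub hi
    simpa using this
  have hdisj : Disjoint A pad := Finset.disjoint_left.mpr fun i hiA hip =>
    (hpad i hip) (Finset.mem_union_left _ hiA)
  have hcard : (A ∪ pad).card = N := by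
    rw [Finset.card_union_of_disjoint hdisj]
    omega
  have hS : b.S (A ∪ pad) x = b.S A x := by
    rw [S_apply, S_apply, Finset.sum_union hdisj]
    have : ∑ j ∈ pad, b.coeff j x • b.e j = 0 :=
      Finset.sum_eq_zero fun j hj => by
        rw [hx, coeff_sum, if_neg (fun hjF =>
          (hpad j hj) (Finset.mem_union_right _ hjF)), zero_smul]
    rw [this, add_zero]
  rw [← hS]
  exact main' b N (A ∪ pad) hcard F a x hx

lemma one_le_CN (N : ℕ) : 1 ≤ b.CN N := by
  classical
  set x : X := ∑ j ∈ Finset.range (N + 1), (1:𝕜) • b.e j with hxdef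
  have hax : ∀ i, b.coeff i x = if i ∈ Finset.range (N + 1) then (1:𝕜) else 0 := fun i => by
    rw [hxdef, coeff_sum]
  have hGreedy : b.Greedy x (Equiv.refl ℕ) := by
    intro k
    simp only [Equiv.refl_apply]
    rw [hax, hax]
    by_cases h : k + 1 ∈ Finset.range (N + 1)
    · have hk : k ∈ Finset.range (N + 1) := by
        rw [Finset.mem_range] at h ⊢; omega
      rw [if_pos h, if_pos hk]
    · rw [if_neg h, norm_zero]
      positivity
  have hG : b.G N (Equiv.refl ℕ) x = ∑ j ∈ Finset.range N, (1:𝕜) • b.e j := by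
    rw [GreedyBasis.G]
    refine Finset.sum_congr rfl fun k hk => ?_
    rw [Equiv.refl_apply, hax, if_pos (by rw [Finset.mem_range] at hk ⊢; omega)]
  have hrem : x - b.G N (Equiv.refl ℕ) x = (1:𝕜) • b.e N := by
    rw [hG, hxdef, Finset.sum_range_succ]
    abel
  have hnrem : (‖x - b.G N (Equiv.refl ℕ) x‖₊ : ℝ≥0∞) = 1 := by
    rw [hrem]
    simp [b.norm_e N, ← NNReal.coe_inj]
  have hσ_ub : b.σ N x ≤ 1 := by
    rw [GreedyBasis.σ]
    refine iInf_le_of_le (Finset.Icc 1 N) (iInf_le_of_le (by simp)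
      (iInf_le_of_le (fun _ => (1:𝕜)) ?_))
    have hsub : Finset.Icc 1 N ⊆ Finset.range (N + 1) := by
      intro i hi
      rw [Finset.mem_Icc] at hi
      rw [Finset.mem_range]
      omega
    have heq : x - ∑ j ∈ Finset.Icc 1 N, (1:𝕜) • b.e j = (1:𝕜) • b.e 0 := by
      rw [hxdef, ← Finset.sum_sdiff_eq_sub hsub,
        show Finset.range (N + 1) \ Finset.Icc 1 N = {0} from by ext i; simp; omega]
      simp
    rw [heq]
    simp [b.norm_e 0, ← NNReal.coe_le_coe]
  have hσ_ne : b.σ N x ≠ 0 := by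
    refine sigma_pos b N x (Finset.range (N + 1)) (by simp) fun j hj => ?_
    rw [hax, if_pos hj]
    exact one_ne_zero
  have hσ_top : b.σ N x ≠ ⊤ := ne_top_of_le_ne_top ENNReal.one_ne_top hσ_ub
  have h1 : (1:ℝ≥0∞) = b.σ N x / b.σ N x := (ENNReal.div_self hσ_ne hσ_top).symm
  rw [h1]
  refine le_trans (ENNReal.div_le_div_right (hσ_ub.trans hnrem.symm.le) _) ?_
  exact le_CN b hGreedy hσ_ne

end Main

/-- For any normalized basis (not necessarily quasi-greedy), `C_N ≥ k_N / 4`. -/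
theorem stmt4 (b : GreedyBasis 𝕜 X) (N : ℕ) :
    b.kN N / 4 ≤ b.CN N := by
  rw [ENNReal.div_le_iff_le_mul (Or.inl (by norm_num)) (Or.inl (by norm_num)),
    GreedyBasis.kN]
  refine iSup_le fun A => iSup_le fun hA => ?_
  by_cases htop : b.CN N = ⊤
  · rw [htop, ENNReal.top_mul (by norm_num)]
    exact le_top
  set c := (b.CN N).toReal with hc
  have hc1 : (1:ℝ) ≤ c := by
    have h := one_le_CN b N
    have h2 := ENNReal.toReal_mono htop h
    simpa using h2
  have hbound : ∀ y : X, ‖b.S A y‖ ≤ (1 + c) * ‖y‖ := by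
    intro y
    have hp := b.expansion y
    have hS : Tendsto (fun n => b.S A (∑ j ∈ Finset.range n, b.coeff j y • b.e j))
        atTop (nhds (b.S A y)) := ((b.S A).continuous.tendsto y).comp hp
    refine le_of_tendsto_of_tendsto' hS.norm ((hp.norm).const_mul (1 + c)) fun n => ?_
    set p : X := ∑ j ∈ Finset.range n, b.coeff j y • b.e j with hpdef
    have hm := main b N A hA (Finset.range n) (fun j => b.coeff j y) p hpdef
    have hm' : ‖p - b.S A p‖ ≤ c * ‖p‖ := by
      have h3 := ENNReal.toReal_mono
        (ENNReal.mul_ne_top htop ENNReal.coe_ne_top) hm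
      rw [ENNReal.toReal_mul] at h3
      simpa using h3
    have h4 : ‖b.S A p‖ ≤ ‖p‖ + ‖p - b.S A p‖ := by
      have h5 := norm_sub_le p (p - b.S A p)
      simpa using h5
    calc ‖b.S A p‖ ≤ ‖p‖ + c * ‖p‖ := by linarith
      _ = (1 + c) * ‖p‖ := by ring
  have hop : ‖b.S A‖ ≤ 1 + c := (b.S A).opNorm_le_bound (by linarith) hbound
  have h1 : (‖b.S A‖₊ : ℝ≥0∞) ≤ ENNReal.ofReal (1 + c) := by
    rw [← enorm_eq_nnnorm, ← ofReal_norm]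
    exact ENNReal.ofReal_le_ofReal hop
  have h2 : ENNReal.ofReal (1 + c) = 1 + b.CN N := by
    rw [ENNReal.ofReal_add (by norm_num) (by linarith), ENNReal.ofReal_one, hc,
      ENNReal.ofReal_toReal htop]
  have h3 : 1 + b.CN N ≤ b.CN N * 4 := by
    calc 1 + b.CN N ≤ b.CN N + b.CN N := add_le_add_left (one_le_CN b N) _
      _ = b.CN N * 2 := by ring
      _ ≤ b.CN N * 4 := mul_le_mul_right (by norm_num) _
  exact (h1.trans h2.le).trans h3
end
end

section
/- For any normalized basis (e_j) of a Banach space X, D_N = sup_x σ̃_N(x)/σ_N(x) ≥ k_N/4, where k_N = sup_{|A|≤N} ‖S_A‖. -/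
open Finset NNReal ENNReal Filter

noncomputable section

variable (𝕜 X : Type*) [RCLike 𝕜] [NormedAddCommGroup X] [NormedSpace 𝕜 X]

variable {𝕜 X}

namespace GreedyBasisAux

variable (b : GreedyBasis 𝕜 X)

lemma S_apply (A : Finset ℕ) (x : X) : b.S A x = ∑ j ∈ A, b.coeff j x • b.e j := by
  simp [GreedyBasis.S, ContinuousLinearMap.sum_apply]

lemma coeff_sum (A : Finset ℕ) (c : ℕ → 𝕜) (i : ℕ) :
    b.coeff i (∑ j ∈ A, c j • b.e j) = if i ∈ A then c i else 0 := by
  rw [map_sum]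
  have h : ∀ j ∈ A, b.coeff i (c j • b.e j) = if i = j then c j else 0 := by
    intro j _
    rw [map_smul, b.biorth i j]
    simp [smul_eq_mul, mul_ite]
  rw [Finset.sum_congr rfl h, Finset.sum_ite_eq]

lemma coeff_S (A : Finset ℕ) (x : X) (i : ℕ) :
    b.coeff i (b.S A x) = if i ∈ A then b.coeff i x else 0 := by
  rw [S_apply, coeff_sum]

lemma one_le_norm_coeff (i : ℕ) : 1 ≤ ‖b.coeff i‖ := by
  have h := (b.coeff i).le_opNorm (b.e i)
  rw [b.biorth i i, b.norm_e i, mul_one] at h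
  simpa using h

lemma tendsto_coeff (v : X) :
    Tendsto (fun j => ‖b.coeff j v‖) atTop (nhds 0) := by
  have h := b.expansion v
  have h' : Tendsto (fun n => ∑ j ∈ Finset.range (n+1), b.coeff j v • b.e j) atTop (nhds v) :=
    h.comp (tendsto_add_atTop_nat 1)
  have hd : Tendsto (fun n => b.coeff n v • b.e n) atTop (nhds 0) := by
    have h2 := h'.sub h
    simp only [Finset.sum_range_succ] at h2
    simpa using h2
  have h3 := hd.norm
  simp only [norm_zero] at h3
  have heq : (fun n => ‖b.coeff n v • b.e n‖) = fun n => ‖b.coeff n v‖ := by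
    funext n; rw [norm_smul, b.norm_e n, mul_one]
  rwa [heq] at h3

lemma exists_coeff_ne {z : X} (hz : z ≠ 0) : ∃ j, b.coeff j z ≠ 0 := by
  by_contra h
  push_neg at h
  have h0 : Tendsto (fun n => ∑ j ∈ Finset.range n, b.coeff j z • b.e j) atTop (nhds z) :=
    b.expansion z
  have heq : (fun n : ℕ => ∑ j ∈ Finset.range n, b.coeff j z • b.e j) = fun _ => (0 : X) := by
    funext n
    apply Finset.sum_eq_zero
    intro j _
    rw [h j, zero_smul]
  rw [heq] at h0
  exact hz (tendsto_nhds_unique h0 tendsto_const_nhds)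

lemma norm_ge_coeff (i : ℕ) (w : X) : ‖b.coeff i w‖ / ‖b.coeff i‖ ≤ ‖w‖ := by
  rw [div_le_iff₀ (lt_of_lt_of_le one_pos (one_le_norm_coeff b i))]
  rw [mul_comm]
  exact (b.coeff i).le_opNorm w

lemma σ_le (N : ℕ) (x : X) (A : Finset ℕ) (hA : A.card ≤ N) (c : ℕ → 𝕜) :
    b.σ N x ≤ (‖x - ∑ j ∈ A, c j • b.e j‖₊ : ℝ≥0∞) :=
  iInf_le_of_le A (iInf_le_of_le hA (iInf_le _ c))

lemma σ_le_σt (N : ℕ) (x : X) : b.σ N x ≤ b.σt N x := by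
  apply le_iInf₂
  intro A hA
  have h := σ_le b N x A hA.le (fun j => b.coeff j x)
  rwa [← S_apply] at h


lemma main (N : ℕ) (hD : b.DN N ≠ ⊤) (A : Finset ℕ) (hA : A.card = N) (v : X) :
    ‖v - b.S A v‖ ≤ (b.DN N).toReal * ‖v‖ := by
  set z := v - b.S A v with hzdef
  by_cases hz : z = 0
  · rw [hz, norm_zero]
    exact mul_nonneg ENNReal.toReal_nonneg (norm_nonneg v)
  have hzA : ∀ i ∈ A, b.coeff i z = 0 := by
    intro i hi
    rw [hzdef, map_sub, coeff_S, if_pos hi, sub_self]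
  obtain ⟨j₁, hj₁⟩ := exists_coeff_ne b hz
  have hj₁A : j₁ ∉ A := fun h => hj₁ (hzA j₁ h)
  set M : ℝ := ((A.sup fun j => ‖b.coeff j‖₊ : ℝ≥0) : ℝ) with hMdef
  have hMnn : (0:ℝ) ≤ M := NNReal.coe_nonneg _
  have hzpos : 0 < ‖z‖ := norm_pos_iff.mpr hz
  set T : ℝ := (M + 1) * ‖z‖ with hTdef
  have hTpos : 0 < T := by positivity
  set t : 𝕜 := (T : 𝕜) with htdef
  have hnt : ‖t‖ = T := by rw [htdef, RCLike.norm_ofReal, abs_of_pos hTpos]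
  set w : X := (∑ j ∈ A, t • b.e j) + z with hwdef
  have hcw : ∀ i, b.coeff i w = if i ∈ A then t else b.coeff i z := by
    intro i
    rw [hwdef, map_add, coeff_sum]
    by_cases hi : i ∈ A
    · rw [if_pos hi, if_pos hi, hzA i hi, add_zero]
    · rw [if_neg hi, if_neg hi, zero_add]
  have hSAw : b.S A w = ∑ j ∈ A, t • b.e j := by
    rw [S_apply]
    apply Finset.sum_congr rfl
    intro j hj
    rw [hcw j, if_pos hj]
  have hwSA : w - b.S A w = z := by rw [hSAw, hwdef]; abel
  -- lower bound for σt
  have hσt : (‖z‖₊ : ℝ≥0∞) ≤ b.σt N w := by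
    rw [GreedyBasis.σt]
    apply le_iInf₂
    intro B hB
    by_cases hBA : B = A
    · rw [hBA, hwSA]
    · have hnsub : ¬ A ⊆ B := by
        intro hsub
        exact hBA (Finset.eq_of_subset_of_card_le hsub (by rw [hA, hB])).symm
      obtain ⟨j₀, hj₀A, hj₀B⟩ := Finset.not_subset.mp hnsub
      have hc : b.coeff j₀ (w - b.S B w) = t := by
        rw [map_sub, coeff_S, if_neg hj₀B, sub_zero, hcw, if_pos hj₀A]
      have h1 : T ≤ ‖b.coeff j₀‖ * ‖w - b.S B w‖ := by
        have h0 := (b.coeff j₀).le_opNorm (w - b.S B w)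
        rwa [hc, hnt] at h0
      have hMj : ‖b.coeff j₀‖ ≤ M := by
        rw [hMdef]
        exact_mod_cast (Finset.le_sup (f := fun j => ‖b.coeff j‖₊) hj₀A)
      have h1M : (1:ℝ) ≤ M := le_trans (one_le_norm_coeff b j₀) hMj
      have h2 : (M + 1) * ‖z‖ ≤ M * ‖w - b.S B w‖ := by
        rw [← hTdef]
        exact le_trans h1 (mul_le_mul_of_nonneg_right hMj (norm_nonneg _))
      have h3 : ‖z‖ ≤ ‖w - b.S B w‖ := by
        nlinarith [norm_nonneg (w - b.S B w), norm_nonneg z]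
      exact ENNReal.coe_le_coe.mpr (by exact_mod_cast h3)
  -- upper bound for σ
  have hσ : b.σ N w ≤ (‖v‖₊ : ℝ≥0∞) := by
    have hsplit : ∑ j ∈ A, (t - b.coeff j v) • b.e j
        = (∑ j ∈ A, t • b.e j) - b.S A v := by
      rw [S_apply, ← Finset.sum_sub_distrib]
      apply Finset.sum_congr rfl
      intro j _
      rw [sub_smul]
    have hcalc : w - ∑ j ∈ A, (t - b.coeff j v) • b.e j = v := by
      rw [hsplit, hwdef, hzdef]
      abel
    have h0 := σ_le b N w A (le_of_eq hA) (fun j => t - b.coeff j v)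
    rwa [hcalc] at h0
  have hσtop : b.σ N w ≠ ⊤ := (lt_of_le_of_lt hσ ENNReal.coe_lt_top).ne
  -- σ ≠ 0
  set Sf : Finset ℕ := insert j₁ A with hSf
  set K : ℝ := ((Sf.sup fun i => ‖b.coeff i‖₊ : ℝ≥0) : ℝ) with hKdef
  have hKi : ∀ i ∈ Sf, ‖b.coeff i‖ ≤ K := by
    intro i hi
    rw [hKdef]
    exact_mod_cast (Finset.le_sup (f := fun i => ‖b.coeff i‖₊) hi)
  have hK1 : (1:ℝ) ≤ K :=
    le_trans (one_le_norm_coeff b j₁) (hKi j₁ (Finset.mem_insert_self _ _))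
  have hKpos : (0:ℝ) < K := lt_of_lt_of_le one_pos hK1
  set δ : ℝ := min T ‖b.coeff j₁ z‖ with hδdef
  have hδpos : 0 < δ := lt_min hTpos (norm_pos_iff.mpr hj₁)
  have hσ0 : b.σ N w ≠ 0 := by
    have hlow : ENNReal.ofReal (δ / K) ≤ b.σ N w := by
      rw [GreedyBasis.σ]
      apply le_iInf; intro B
      apply le_iInf; intro hB
      apply le_iInf; intro c
      have hex : ∃ i ∈ Sf, i ∉ B := by
        by_contra hcon
        push_neg at hcon
        have hcard := Finset.card_le_card hcon
        rw [hSf, Finset.card_insert_of_notMem hj₁A, hA] at hcard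
        omega
      obtain ⟨i, hiSf, hiB⟩ := hex
      have hci : b.coeff i (w - ∑ j ∈ B, c j • b.e j) = b.coeff i w := by
        rw [map_sub, coeff_sum, if_neg hiB, sub_zero]
      have hlb : δ ≤ ‖b.coeff i w‖ := by
        rw [hcw i]
        rcases Finset.mem_insert.mp hiSf with h | h
        · subst h
          rw [if_neg hj₁A]
          exact min_le_right _ _
        · rw [if_pos h, hnt]
          exact min_le_left _ _
      have h4 := norm_ge_coeff b i (w - ∑ j ∈ B, c j • b.e j)
      rw [hci] at h4
      have h5 : δ / K ≤ ‖w - ∑ j ∈ B, c j • b.e j‖ :=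
        le_trans (div_le_div₀ (norm_nonneg _) hlb
          (lt_of_lt_of_le one_pos (one_le_norm_coeff b i)) (hKi i hiSf)) h4
      rw [← enorm_eq_nnnorm, ← ofReal_norm]
      exact ENNReal.ofReal_le_ofReal h5
    exact (lt_of_lt_of_le (ENNReal.ofReal_pos.mpr (div_pos hδpos hKpos)) hlow).ne'
  -- conclude
  have hDN : b.DN N = ⨆ (x : X) (_ : b.σ N x ≠ 0), b.σt N x / b.σ N x := rfl
  have hDle : b.σt N w / b.σ N w ≤ b.DN N := by
    rw [hDN]
    exact le_trans (le_iSup (fun _ : b.σ N w ≠ 0 => b.σt N w / b.σ N w) hσ0)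
      (le_iSup (fun x => ⨆ (_ : b.σ N x ≠ 0), b.σt N x / b.σ N x) w)
  have h6 : b.σt N w ≤ b.DN N * b.σ N w :=
    (ENNReal.div_le_iff_le_mul (Or.inl hσ0) (Or.inl hσtop)).mp hDle
  have hchain : (‖z‖₊ : ℝ≥0∞) ≤ b.DN N * (‖v‖₊ : ℝ≥0∞) :=
    le_trans hσt (le_trans h6 (mul_le_mul_right hσ _))
  have hfin := ENNReal.toReal_mono (ENNReal.mul_ne_top hD ENNReal.coe_ne_top) hchain
  rwa [ENNReal.coe_toReal, coe_nnnorm, ENNReal.toReal_mul, ENNReal.coe_toReal,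
    coe_nnnorm] at hfin


lemma one_le_DN (N : ℕ) : (1 : ℝ≥0∞) ≤ b.DN N := by
  set x₀ : X := ∑ j ∈ Finset.range (N+1), b.e j with hx₀
  have hcx : ∀ i ∈ Finset.range (N+1), b.coeff i x₀ = 1 := by
    intro i hi
    have h0 : x₀ = ∑ j ∈ Finset.range (N+1), (1:𝕜) • b.e j := by
      rw [hx₀]
      simp
    rw [h0, coeff_sum, if_pos hi]
  set K : ℝ := (((Finset.range (N+1)).sup fun i => ‖b.coeff i‖₊ : ℝ≥0) : ℝ) with hK
  have hKi : ∀ i ∈ Finset.range (N+1), ‖b.coeff i‖ ≤ K := by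
    intro i hi
    rw [hK]
    exact_mod_cast (Finset.le_sup (f := fun i => ‖b.coeff i‖₊) hi)
  have hKpos : (0:ℝ) < K :=
    lt_of_lt_of_le one_pos
      (le_trans (one_le_norm_coeff b 0) (hKi 0 (by simp)))
  have hσ0 : b.σ N x₀ ≠ 0 := by
    have hlow : ENNReal.ofReal (1 / K) ≤ b.σ N x₀ := by
      rw [GreedyBasis.σ]
      apply le_iInf; intro B
      apply le_iInf; intro hB
      apply le_iInf; intro c
      have hex : ∃ i ∈ Finset.range (N+1), i ∉ B := by
        by_contra hcon
        push_neg at hcon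
        have hcard := Finset.card_le_card hcon
        rw [Finset.card_range] at hcard
        omega
      obtain ⟨i, hi, hiB⟩ := hex
      have hci : b.coeff i (x₀ - ∑ j ∈ B, c j • b.e j) = 1 := by
        rw [map_sub, coeff_sum, if_neg hiB, sub_zero, hcx i hi]
      have h4 := norm_ge_coeff b i (x₀ - ∑ j ∈ B, c j • b.e j)
      rw [hci, norm_one] at h4
      have h5 : 1 / K ≤ ‖x₀ - ∑ j ∈ B, c j • b.e j‖ :=
        le_trans (one_div_le_one_div_of_le
          (lt_of_lt_of_le one_pos (one_le_norm_coeff b i)) (hKi i hi)) h4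
      rw [← enorm_eq_nnnorm, ← ofReal_norm]
      exact ENNReal.ofReal_le_ofReal h5
    exact (lt_of_lt_of_le (ENNReal.ofReal_pos.mpr (by positivity)) hlow).ne'
  have hσtop : b.σ N x₀ ≠ ⊤ := by
    have h0 := σ_le b N x₀ ∅ (Nat.zero_le N) 0
    simp only [Finset.sum_empty, sub_zero] at h0
    exact (lt_of_le_of_lt h0 ENNReal.coe_lt_top).ne
  have hone : (1:ℝ≥0∞) ≤ b.σt N x₀ / b.σ N x₀ := by
    rw [ENNReal.le_div_iff_mul_le (Or.inl hσ0) (Or.inl hσtop), one_mul]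
    exact σ_le_σt b N x₀
  have hDN : b.DN N = ⨆ (x : X) (_ : b.σ N x ≠ 0), b.σt N x / b.σ N x := rfl
  refine le_trans hone ?_
  rw [hDN]
  exact le_trans (le_iSup (fun _ : b.σ N x₀ ≠ 0 => b.σt N x₀ / b.σ N x₀) hσ0)
    (le_iSup (fun x => ⨆ (_ : b.σ N x ≠ 0), b.σt N x / b.σ N x) x₀)

lemma SA_bound (N : ℕ) (hD : b.DN N ≠ ⊤) (A : Finset ℕ) (hA : A.card ≤ N) (v : X) :
    ‖b.S A v‖ ≤ (1 + (b.DN N).toReal) * ‖v‖ := by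
  apply _root_.le_of_forall_pos_le_add
  intro ε hε
  have hε' : (0:ℝ) < ε / (N+1) := by positivity
  have hev : ∀ᶠ j in atTop, ‖b.coeff j v‖ < ε / (N+1) :=
    (tendsto_coeff b v).eventually (gt_mem_nhds hε')
  obtain ⟨n₀, hn₀⟩ := Filter.eventually_atTop.mp hev
  set m : ℕ := max n₀ (if h : A.Nonempty then A.max' h + 1 else 0) with hm
  have hmA : ∀ a ∈ A, a < m := by
    intro a ha
    have hne : A.Nonempty := ⟨a, ha⟩
    have h1 : a < A.max' hne + 1 := Nat.lt_succ_of_le (A.le_max' a ha)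
    have h2 : A.max' hne + 1 ≤ m := by
      rw [hm, dif_pos hne]
      exact le_max_right _ _
    omega
  set F : Finset ℕ := Finset.Ico m (m + (N - A.card)) with hF
  have hdisj : Disjoint A F := by
    rw [Finset.disjoint_left]
    intro a ha haF
    have h1 := (Finset.mem_Ico.mp haF).1
    exact absurd h1 (not_le.mpr (hmA a ha))
  have hcardF : F.card = N - A.card := by rw [hF, Nat.card_Ico]; omega
  have hcardA' : (A ∪ F).card = N := by
    rw [Finset.card_union_of_disjoint hdisj, hcardF]
    omega
  have hmain := main b N hD (A ∪ F) hcardA' v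
  have hsplit : b.S (A ∪ F) v = b.S A v + b.S F v := by
    rw [S_apply, S_apply, S_apply, Finset.sum_union hdisj]
  have hSF : ‖b.S F v‖ ≤ ε := by
    rw [S_apply]
    have hb1 : ‖∑ j ∈ F, b.coeff j v • b.e j‖ ≤ ∑ j ∈ F, ‖b.coeff j v • b.e j‖ :=
      norm_sum_le _ _
    have hb2 : ∑ j ∈ F, ‖b.coeff j v • b.e j‖ ≤ ∑ _j ∈ F, (ε / (N+1)) := by
      apply Finset.sum_le_sum
      intro j hj
      rw [norm_smul, b.norm_e j, mul_one]
      have hjm : n₀ ≤ j := le_trans (le_max_left _ _) (Finset.mem_Ico.mp hj).1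
      exact (hn₀ j hjm).le
    have hb3 : ∑ _j ∈ F, (ε / (N+1)) = (F.card : ℝ) * (ε / (N+1)) := by
      rw [Finset.sum_const, nsmul_eq_mul]
    have hb4 : (F.card : ℝ) * (ε / (N+1)) ≤ (N:ℝ) * (ε / (N+1)) := by
      apply mul_le_mul_of_nonneg_right _ hε'.le
      exact_mod_cast (by omega : F.card ≤ N)
    have hb5 : (N:ℝ) * (ε / (N+1)) ≤ ε := by
      have h7 : (0:ℝ) < (N:ℝ)+1 := by positivity
      have h8 : (N:ℝ) * (ε / (N+1)) = ε * ((N:ℝ)/((N:ℝ)+1)) := by ring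
      have h9 : (N:ℝ)/((N:ℝ)+1) ≤ 1 := (div_le_one h7).mpr (by linarith)
      rw [h8]
      calc ε * ((N:ℝ)/((N:ℝ)+1)) ≤ ε * 1 := mul_le_mul_of_nonneg_left h9 hε.le
      _ = ε := mul_one ε
    linarith
  have hrw : b.S A v = v - (v - b.S (A ∪ F) v) - b.S F v := by
    rw [hsplit]; abel
  calc ‖b.S A v‖ = ‖v - (v - b.S (A ∪ F) v) - b.S F v‖ := by rw [← hrw]
  _ ≤ ‖v - (v - b.S (A ∪ F) v)‖ + ‖b.S F v‖ := norm_sub_le _ _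
  _ ≤ (‖v‖ + ‖v - b.S (A ∪ F) v‖) + ε := add_le_add (norm_sub_le _ _) hSF
  _ ≤ (‖v‖ + (b.DN N).toReal * ‖v‖) + ε := by linarith
  _ = (1 + (b.DN N).toReal) * ‖v‖ + ε := by ring

end GreedyBasisAux



/-- For any normalized basis, `D_N ≥ k_N / 4`. -/
theorem stmt6 (b : GreedyBasis 𝕜 X) (N : ℕ) :
    b.kN N / 4 ≤ b.DN N := by
  by_cases hD : b.DN N = ⊤
  · rw [hD]; exact le_top
  · have h1 : (1:ℝ≥0∞) ≤ b.DN N := GreedyBasisAux.one_le_DN b N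
    have hk : b.kN N ≤ 1 + b.DN N := by
      rw [GreedyBasis.kN]
      apply iSup₂_le
      intro A hA
      have hop : ‖b.S A‖ ≤ 1 + (b.DN N).toReal := by
        apply ContinuousLinearMap.opNorm_le_bound _
          (add_nonneg zero_le_one ENNReal.toReal_nonneg)
        intro v
        exact GreedyBasisAux.SA_bound b N hD A hA v
      calc (‖b.S A‖₊ : ℝ≥0∞) = ENNReal.ofReal ‖b.S A‖ :=
            (ofReal_norm _).symm
        _ ≤ ENNReal.ofReal (1 + (b.DN N).toReal) := ENNReal.ofReal_le_ofReal hop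
        _ ≤ ENNReal.ofReal 1 + ENNReal.ofReal (b.DN N).toReal := ENNReal.ofReal_add_le
        _ = 1 + b.DN N := by rw [ENNReal.ofReal_one, ENNReal.ofReal_toReal hD]
    have hk4 : b.kN N ≤ b.DN N * 4 := by
      calc b.kN N ≤ 1 + b.DN N := hk
      _ ≤ b.DN N + b.DN N := add_le_add_left h1 _
      _ = b.DN N * 2 := by rw [mul_two]
      _ ≤ b.DN N * 4 := mul_le_mul_right (by norm_num) _
    exact (ENNReal.div_le_iff_le_mul (Or.inr hD)
      (Or.inr (lt_of_lt_of_le zero_lt_one h1).ne')).mpr hk4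
end
end

section
/- Let (e_j) be a quasi-greedy basis of X with constant K, and suppose c_1·(min_{k∈A}|a_k|)·‖Σ_{k∈A} e_k‖ ≤ ‖Σ_{k∈A} a_k e_k‖ ≤ c_2·(max_{k∈A}|a_k|)·‖Σ_{k∈A} e_k‖ holds for all finite A and scalars (a_k). Then for x = Σ_i a_i e_i, 0 < α < β < ∞, F = {i : α < |a_i| ≤ β}, and any subset P ⊆ F, one has ‖S_P(x)‖ ≤ K(c_2/c_1)(β/α)·‖S_F(x)‖. -/
open Finset NNReal ENNReal Filter

noncomputable section

variable (𝕜 X : Type*) [RCLike 𝕜] [NormedAddCommGroup X] [NormedSpace 𝕜 X]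

variable {𝕜 X}

/-- Any subset-first enumeration extends to a permutation of `ℕ`. -/
lemma exists_perm_aux (P F : Finset ℕ) (hP : P ⊆ F) :
    ∃ π : Equiv.Perm ℕ, (∀ k, π k ∈ F ↔ k < F.card) ∧
      (Finset.range P.card).image (π : ℕ → ℕ) = P := by
  classical
  set l : List ℕ := P.sort (· ≤ ·) ++ (F \ P).sort (· ≤ ·) with hl
  have hlen : l.length = F.card := by
    have h2 := Finset.card_le_card hP
    have h3 := Finset.card_sdiff_of_subset hP
    simp [hl, Finset.length_sort]
    omega
  have hmem : ∀ m, m ∈ l ↔ m ∈ F := by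
    intro m
    simp only [hl, List.mem_append, Finset.mem_sort, Finset.mem_sdiff]
    constructor
    · rintro (h | ⟨h, _⟩) <;> [exact hP h; exact h]
    · intro h
      by_cases hm : m ∈ P
      · exact Or.inl hm
      · exact Or.inr ⟨h, hm⟩
  have hnd : l.Nodup := by
    refine List.Nodup.append (Finset.sort_nodup _ _) (Finset.sort_nodup _ _) ?_
    intro m hm hm'
    rw [Finset.mem_sort] at hm
    rw [Finset.mem_sort, Finset.mem_sdiff] at hm'
    exact hm'.2 hm
  have hinf : (setOf (fun n => n ∉ F)).Infinite := by
    have : (setOf (fun n => n ∈ F)).Finite := F.finite_toSet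
    have := Set.Finite.infinite_compl (s := (setOf (fun n => n ∈ F))) this
    exact this
  set f : ℕ → ℕ := fun k =>
    if h : k < l.length then l.get ⟨k, h⟩ else Nat.nth (fun n => n ∉ F) (k - l.length)
    with hf
  have hfF : ∀ k, f k ∈ F ↔ k < l.length := by
    intro k
    by_cases h : k < l.length
    · simp only [hf, dif_pos h]
      exact ⟨fun _ => h, fun _ => (hmem _).1 (List.get_mem l ⟨k, h⟩)⟩
    · simp only [hf, dif_neg h]
      constructor
      · intro hc
        exact absurd hc (Nat.nth_mem_of_infinite hinf _)
      · intro hc; exact absurd hc h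
  have hinj : Function.Injective f := by
    intro a b hab
    by_cases ha : a < l.length <;> by_cases hb : b < l.length
    · simp only [hf, dif_pos ha, dif_pos hb] at hab
      have := (List.Nodup.get_inj_iff hnd).1 hab
      exact congrArg Fin.val this
    · exfalso
      have h1 : f a ∈ F := (hfF a).2 ha
      have h2 : ¬ f b ∈ F := fun hc => hb ((hfF b).1 hc)
      rw [hab] at h1; exact h2 h1
    · exfalso
      have h1 : f b ∈ F := (hfF b).2 hb
      have h2 : ¬ f a ∈ F := fun hc => ha ((hfF a).1 hc)
      rw [← hab] at h1; exact h2 h1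
    · simp only [hf, dif_neg ha, dif_neg hb] at hab
      have := Nat.nth_injective hinf hab
      omega
  have hsurj : Function.Surjective f := by
    intro m
    by_cases hm : m ∈ F
    · have hml : m ∈ l := (hmem m).2 hm
      obtain ⟨⟨k, hk⟩, hkm⟩ := List.get_of_mem hml
      exact ⟨k, by simp only [hf, dif_pos hk]; exact hkm⟩
    · refine ⟨Nat.count (fun n => n ∉ F) m + l.length, ?_⟩
      have hnl : ¬ (Nat.count (fun n => n ∉ F) m + l.length < l.length) := by omega
      simp only [hf, dif_neg hnl, Nat.add_sub_cancel]
      exact Nat.nth_count hm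
  set π : Equiv.Perm ℕ := Equiv.ofBijective f ⟨hinj, hsurj⟩ with hπ
  refine ⟨π, ?_, ?_⟩
  · intro k
    have h := hfF k
    rw [hlen] at h
    exact h
  · have hsub : (Finset.range P.card).image (π : ℕ → ℕ) ⊆ P := by
      intro m hm
      simp only [Finset.mem_image, Finset.mem_range] at hm
      obtain ⟨k, hk, hkm⟩ := hm
      have hkl : k < l.length := by
        rw [hlen]; exact lt_of_lt_of_le hk (Finset.card_le_card hP)
      have : (π : ℕ → ℕ) k = l.get ⟨k, hkl⟩ := by simp only [hπ, Equiv.ofBijective_apply, hf, dif_pos hkl]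
      rw [this] at hkm
      have hkP : k < (P.sort (· ≤ ·)).length := by simp [Finset.length_sort, hk]
      have : l.get ⟨k, hkl⟩ = (P.sort (· ≤ ·)).get ⟨k, hkP⟩ := by
        simp [hl]
        rw [List.getElem_append_left hkP]
      rw [this] at hkm
      rw [← hkm]
      exact (Finset.mem_sort _).1 (List.get_mem _ ⟨k, hkP⟩)
    refine Finset.eq_of_subset_of_card_le hsub ?_
    rw [Finset.card_image_of_injective _ (Equiv.injective π), Finset.card_range]

/-- For a quasi-greedy basis satisfying the scalar-comparison inequalities with
constants `c₁, c₂`: if `F = {i : α < |a_i| ≤ β}` (`0 < α < β`) and `P ⊆ F`, then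
`‖S_P(x)‖ ≤ K (c₂/c₁) (β/α) ‖S_F(x)‖`. -/
theorem stmt8 (b : GreedyBasis 𝕜 X) (K : ℝ≥0) (hK : b.QuasiGreedy K)
    (c₁ c₂ : ℝ) (hc₁ : 0 < c₁) (hc₂ : 0 < c₂)
    (hlow : ∀ (A : Finset ℕ) (a : ℕ → 𝕜) (m : ℝ), (∀ k ∈ A, m ≤ ‖a k‖) →
      c₁ * m * ‖∑ k ∈ A, b.e k‖ ≤ ‖∑ k ∈ A, a k • b.e k‖)
    (hhigh : ∀ (A : Finset ℕ) (a : ℕ → 𝕜) (M : ℝ), (∀ k ∈ A, ‖a k‖ ≤ M) →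
      ‖∑ k ∈ A, a k • b.e k‖ ≤ c₂ * M * ‖∑ k ∈ A, b.e k‖)
    (x : X) (α β : ℝ) (h0 : 0 < α) (hab : α < β) (F P : Finset ℕ) (hP : P ⊆ F)
    (hF : ∀ i : ℕ, i ∈ F ↔ α < ‖b.coeff i x‖ ∧ ‖b.coeff i x‖ ≤ β) :
    ‖b.S P x‖ ≤ K * (c₂ / c₁) * (β / α) * ‖b.S F x‖ := by
  classical
  -- projections as sums
  have hS : ∀ (A : Finset ℕ), b.S A x = ∑ k ∈ A, b.coeff k x • b.e k := by
    intro A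
    simp [GreedyBasis.S, ContinuousLinearMap.sum_apply]
  -- the vector y = 1_F
  set y : X := ∑ k ∈ F, b.e k with hy
  have hcoeffy : ∀ i, b.coeff i y = if i ∈ F then 1 else 0 := by
    intro i
    rw [hy, map_sum]
    rw [Finset.sum_congr rfl (fun j _ => b.biorth i j)]
    simp [Finset.sum_ite_eq, eq_comm]
  obtain ⟨π, hπF, hπP⟩ := exists_perm_aux P F hP
  -- greedy ordering for y
  have hgreedy : b.Greedy y π := by
    intro k
    by_cases h : π (k + 1) ∈ F
    · have hk1 : k + 1 < F.card := (hπF _).1 h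
      have hk : π k ∈ F := (hπF _).2 (by omega)
      rw [hcoeffy, hcoeffy, if_pos h, if_pos hk]
    · rw [hcoeffy, if_neg h]
      simp [norm_nonneg]
  -- G_{|P|} y = 1_P
  have hG : b.G P.card π y = ∑ j ∈ P, b.e j := by
    rw [GreedyBasis.G]
    have h1 : ∀ k ∈ Finset.range P.card, b.coeff (π k) y • b.e (π k) = b.e (π k) := by
      intro k hk
      rw [Finset.mem_range] at hk
      have : π k ∈ F := (hπF _).2 (lt_of_lt_of_le hk (Finset.card_le_card hP))
      rw [hcoeffy, if_pos this, one_smul]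
    rw [Finset.sum_congr rfl h1]
    have himg : ∑ j ∈ (Finset.range P.card).image (π : ℕ → ℕ), b.e j
        = ∑ k ∈ Finset.range P.card, b.e (π k) :=
      Finset.sum_image (fun a _ c _ h => π.injective h)
    rw [hπP] at himg
    exact himg.symm
  have hKy : ‖∑ j ∈ P, b.e j‖ ≤ (K : ℝ) * ‖∑ k ∈ F, b.e k‖ := by
    have h := hK y π hgreedy P.card
    rw [hG] at h
    simpa [hy] using h
  -- upper bound on S_P
  have hup : ‖b.S P x‖ ≤ c₂ * β * ‖∑ j ∈ P, b.e j‖ := by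
    rw [hS]
    refine hhigh P (fun k => b.coeff k x) β ?_
    intro k hk
    exact ((hF k).1 (hP hk)).2
  -- lower bound on S_F
  have hlo : c₁ * α * ‖∑ j ∈ F, b.e j‖ ≤ ‖b.S F x‖ := by
    rw [hS]
    refine hlow F (fun k => b.coeff k x) α ?_
    intro k hk
    exact le_of_lt ((hF k).1 hk).1
  -- combine
  have hKnn : (0 : ℝ) ≤ (K : ℝ) := K.coe_nonneg
  have hβ : (0 : ℝ) < β := h0.trans hab
  have hv : (0 : ℝ) ≤ ‖∑ j ∈ F, b.e j‖ := norm_nonneg _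
  calc ‖b.S P x‖ ≤ c₂ * β * ‖∑ j ∈ P, b.e j‖ := hup
    _ ≤ c₂ * β * ((K : ℝ) * ‖∑ k ∈ F, b.e k‖) := by
        apply mul_le_mul_of_nonneg_left hKy (by positivity)
    _ = (K : ℝ) * (c₂ / c₁) * (β / α) * (c₁ * α * ‖∑ j ∈ F, b.e j‖) := by
        field_simp
    _ ≤ (K : ℝ) * (c₂ / c₁) * (β / α) * ‖b.S F x‖ := by
        apply mul_le_mul_of_nonneg_left hlo (by positivity)
end
end
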